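/- arXiv:2106.15685 — 13 statements merged into one kernel-verified Lean document; each statement's English description precedes it below -/
import Mathlib

section
/- Let R ≥ 2 and let a ≥ 3 be an odd integer. Let λ_1, …, λ_R be positive and pairwise distinct reals, and fix k ∈ {1,…,R}. Suppose v : [0,∞) → ℝ^R is a solution of the loading dynamics dv_i/dt = λ_i v_i^a − v_i ∑_{j=1}^R λ_j v_j^{a+1} whose initial condition satisfies v_k(0) ≠ 0 and, for every i ≠ k, λ_i^{1/(a−1)} |v_i(0)| < λ_k^{1/(a−1)} |v_k(0)|. Then v(t) converges as t → ∞ to e_k if v_k(0) > 0, and to −e_k if v_k(0) < 0. -/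
/-!
Write the dynamics as `v_i' = f_i v_i` with `f_i = λ_i v_i^(a-1) - S` and
`S = ∑ λ_j v_j^(a+1) ≥ 0` (`a + 1` is even). Then every coordinate is its initial value times a
positive exponential, and `|v|² - 1 = (|v(0)|² - 1) exp (-2 ∫ S)`, so `|v|²` stays between `1`
and `|v(0)|²`. In the scaled amplitudes `A_i = λ_i^(1/(a-1)) |v_i|` the rates become
`f_i = A_i^(a-1) - S`, so `log (A_i / A_k)` has derivative `A_i^(a-1) - A_k^(a-1)`, which is
negative whenever `A_i < A_k`: the basin is forward invariant and `A_k` dominates every `A_i`.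
Hence `|v|²` bounds `A_k`, and so `S`, away from `0`; this makes `|v|² → 1` and
`A_i / A_k → 0` exponentially for `i ≠ k`, and `v_k` keeps its sign.
-/

open Filter Topology Set Real

section LinearODE

lemma le_add_mul_of_hasDerivAt_le {ψ d : ℝ → ℝ} {C : ℝ}
    (hψ : ∀ t ≥ (0 : ℝ), HasDerivAt ψ (d t) t) (hd : ∀ t ≥ (0 : ℝ), d t ≤ C)
    {t : ℝ} (ht : 0 ≤ t) : ψ t ≤ ψ 0 + C * t := by
  have hB : ∀ s, HasDerivAt (fun s => ψ 0 + C * s) C s := fun s => by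
    simpa using ((hasDerivAt_id s).const_mul C).const_add (ψ 0)
  exact image_le_of_deriv_right_le_deriv_boundary (a := 0) (b := t)
    (fun s hs => (hψ s hs.1).continuousAt.continuousWithinAt)
    (fun s hs => (hψ s hs.1).hasDerivWithinAt) (by simp)
    (fun s _ => (hB s).continuousAt.continuousWithinAt) (fun s _ => (hB s).hasDerivWithinAt)
    (fun s hs => hd s hs.1) ⟨ht, le_rfl⟩

lemma nonpos_of_hasDerivAt_neg_of_eq_zero {ψ d : ℝ → ℝ} (h0 : ψ 0 ≤ 0)
    (hψ : ∀ t ≥ (0 : ℝ), HasDerivAt ψ (d t) t) (hd : ∀ t ≥ (0 : ℝ), ψ t = 0 → d t < 0)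
    {t : ℝ} (ht : 0 ≤ t) : ψ t ≤ 0 :=
  image_le_of_deriv_right_lt_deriv_boundary (a := 0) (b := t) (B := fun _ => 0) (B' := fun _ => 0)
    (fun s hs => (hψ s hs.1).continuousAt.continuousWithinAt)
    (fun s hs => (hψ s hs.1).hasDerivWithinAt) h0 (fun _ => hasDerivAt_const _ _)
    (fun s hs => hd s hs.1) ⟨ht, le_rfl⟩

lemma tendsto_zero_of_abs_le_mul_exp {x : ℝ → ℝ} {C δ : ℝ} (hδ : 0 < δ)
    (hx : ∀ t ≥ (0 : ℝ), |x t| ≤ C * exp (-(δ * t))) : Tendsto x atTop (𝓝 0) := by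
  refine squeeze_zero_norm' ((eventually_ge_atTop 0).mono hx) ?_
  simpa using (tendsto_exp_neg_atTop_nhds_zero.comp (tendsto_id.const_mul_atTop hδ)).const_mul C

/-- `∫₀ᵗ g`, with `g` extended to `t < 0` by `g 0` so that `logGrowth g` is differentiable at
`t = 0` when `g` is only known to be continuous on `[0, ∞)`. -/
noncomputable def logGrowth (g : ℝ → ℝ) (t : ℝ) : ℝ := ∫ s in (0 : ℝ)..t, g (max s 0)

@[simp]
lemma logGrowth_zero (g : ℝ → ℝ) : logGrowth g 0 = 0 := intervalIntegral.integral_same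

lemma hasDerivAt_logGrowth {g : ℝ → ℝ} (hg : ContinuousOn g (Ici 0)) {t : ℝ} (ht : 0 ≤ t) :
    HasDerivAt (logGrowth g) (g t) t := by
  have hcont : Continuous fun s => g (max s 0) :=
    hg.comp_continuous (continuous_id.max continuous_const) fun s => le_max_right s 0
  have := (hcont.integral_hasStrictDerivAt 0 t).hasDerivAt
  rwa [max_eq_left ht] at this

lemma eq_mul_exp_logGrowth {x g : ℝ → ℝ} (hg : ContinuousOn g (Ici 0))
    (hx : ∀ t ≥ (0 : ℝ), HasDerivAt x (g t * x t) t) {t : ℝ} (ht : 0 ≤ t) :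
    x t = x 0 * exp (logGrowth g t) := by
  have hconst : ∀ s ∈ Icc 0 t, x s * exp (-logGrowth g s) = x 0 * exp (-logGrowth g 0) := by
    have hderiv : ∀ s ≥ (0 : ℝ), HasDerivAt (fun s => x s * exp (-logGrowth g s)) 0 s :=
      fun s hs =>
        ((hx s hs).fun_mul (hasDerivAt_logGrowth hg hs).fun_neg.exp).congr_deriv (by ring)
    exact constant_of_has_deriv_right_zero
      (fun s hs => (hderiv s hs.1).continuousAt.continuousWithinAt)
      (fun s hs => (hderiv s hs.1).hasDerivWithinAt)
  calc x t = x t * exp (-logGrowth g t) * exp (logGrowth g t) := by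
        rw [mul_assoc, ← exp_add, neg_add_cancel, exp_zero, mul_one]
    _ = x 0 * exp (logGrowth g t) := by
        rw [hconst t ⟨ht, le_rfl⟩, logGrowth_zero, neg_zero, exp_zero, mul_one]

end LinearODE

section LoadingDynamics

variable {ι : Type*} {a : ℕ} {i k : ι} {lam : ι → ℝ} {v : ℝ → ι → ℝ}

/-- The form `T(x, …, x)` of the odeco tensor `T = ∑ⱼ λⱼ eⱼ^⊗(a+1)`. -/
def odecoForm [Fintype ι] (a : ℕ) (lam x : ι → ℝ) : ℝ := ∑ j, lam j * x j ^ (a + 1)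

def IsLoadingSolution [Fintype ι] (a : ℕ) (lam : ι → ℝ) (v : ℝ → ι → ℝ) : Prop :=
  ∀ t ≥ (0 : ℝ), ∀ i,
    HasDerivAt (fun s => v s i) (lam i * v t i ^ a - v t i * odecoForm a lam (v t)) t

/-- The loading equation reads `v_i' = growthRate a lam v i t * v_i`. -/
def growthRate [Fintype ι] (a : ℕ) (lam : ι → ℝ) (v : ℝ → ι → ℝ) (i : ι) (t : ℝ) : ℝ :=
  lam i * v t i ^ (a - 1) - odecoForm a lam (v t)

noncomputable def scaledAmp (a : ℕ) (lam x : ι → ℝ) (i : ι) : ℝ := lam i ^ ((a : ℝ) - 1)⁻¹ * |x i|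

def InBasin (a : ℕ) (lam : ι → ℝ) (k : ι) (x : ι → ℝ) : Prop :=
  x k ≠ 0 ∧ ∀ i ≠ k, scaledAmp a lam x i < scaledAmp a lam x k

lemma odecoForm_nonneg [Fintype ι] (hodd : Odd a) (hlam : ∀ i, 0 ≤ lam i) (x : ι → ℝ) :
    0 ≤ odecoForm a lam x :=
  Finset.sum_nonneg fun j _ => mul_nonneg (hlam j) (hodd.add_one.pow_nonneg _)

lemma scaledAmp_pow (ha : 1 < a) (hodd : Odd a) (hlam : ∀ i, 0 ≤ lam i) (x : ι → ℝ) (i : ι) :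
    scaledAmp a lam x i ^ (a - 1) = lam i * x i ^ (a - 1) := by
  have hcast : (a : ℝ) - 1 = ((a - 1 : ℕ) : ℝ) := by rw [Nat.cast_sub ha.le, Nat.cast_one]
  rw [scaledAmp, mul_pow, hcast, rpow_inv_natCast_pow (hlam i) (by omega),
    (Nat.Odd.sub_odd hodd odd_one).pow_abs]

lemma mul_pow_le_odecoForm [Fintype ι] (hodd : Odd a) (hlam : ∀ i, 0 ≤ lam i) (x : ι → ℝ)
    (k : ι) : lam k * x k ^ (a + 1) ≤ odecoForm a lam x :=
  Finset.single_le_sum (f := fun j => lam j * x j ^ (a + 1))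
    (fun j _ => mul_nonneg (hlam j) (hodd.add_one.pow_nonneg _)) (Finset.mem_univ k)

lemma scaledAmp_nonneg (hl : 0 ≤ lam i) (x : ι → ℝ) : 0 ≤ scaledAmp a lam x i :=
  mul_nonneg (rpow_nonneg hl _) (abs_nonneg _)

lemma sum_sq_le_sq_mul_sum_inv_sq [Fintype ι] {x c : ι → ℝ} {M : ℝ} (hc : ∀ j, 0 < c j)
    (hM : ∀ j, c j * |x j| ≤ M) : ∑ j, x j ^ 2 ≤ M ^ 2 * ∑ j, (c j)⁻¹ ^ 2 := by
  rw [Finset.mul_sum]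
  refine Finset.sum_le_sum fun j _ => ?_
  have hcj := (hc j).ne'
  calc x j ^ 2 = (c j * |x j|) ^ 2 * (c j)⁻¹ ^ 2 := by field_simp; rw [sq_abs]
    _ ≤ M ^ 2 * (c j)⁻¹ ^ 2 := by
      gcongr
      · exact mul_nonneg (hc j).le (abs_nonneg _)
      · exact hM j

namespace IsLoadingSolution

variable [Fintype ι]

lemma continuousOn_coord (hv : IsLoadingSolution a lam v) (i : ι) :
    ContinuousOn (fun t => v t i) (Ici 0) :=
  fun t ht => (hv t ht i).continuousAt.continuousWithinAt

lemma continuousOn_odecoForm (hv : IsLoadingSolution a lam v) :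
    ContinuousOn (fun t => odecoForm a lam (v t)) (Ici 0) :=
  continuousOn_finsetSum _ fun j _ => ((hv.continuousOn_coord j).pow _).const_smul (lam j)

lemma continuousOn_growthRate (hv : IsLoadingSolution a lam v) (i : ι) :
    ContinuousOn (growthRate a lam v i) (Ici 0) :=
  (((hv.continuousOn_coord i).pow _).const_smul (lam i)).sub hv.continuousOn_odecoForm

lemma eq_mul_exp (hv : IsLoadingSolution a lam v) (ha : a ≠ 0) (i : ι) {t : ℝ} (ht : 0 ≤ t) :
    v t i = v 0 i * exp (logGrowth (growthRate a lam v i) t) :=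
  eq_mul_exp_logGrowth (x := fun s => v s i) (hv.continuousOn_growthRate i)
    (fun s hs => (hv s hs i).congr_deriv <| by
      rw [growthRate, sub_mul, mul_assoc, pow_sub_one_mul ha]; ring) ht

lemma hasDerivAt_normSq_sub_one (hv : IsLoadingSolution a lam v) {t : ℝ} (ht : 0 ≤ t) :
    HasDerivAt (fun s => ∑ j, v s j ^ 2 - 1)
      (-2 * odecoForm a lam (v t) * (∑ j, v t j ^ 2 - 1)) t := by
  have hsq : ∀ j, HasDerivAt (fun s => v s j ^ 2)
      (2 * (lam j * v t j ^ (a + 1)) - 2 * odecoForm a lam (v t) * v t j ^ 2) t :=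
    fun j => ((hv t ht j).fun_pow 2).congr_deriv (by ring)
  refine ((HasDerivAt.fun_sum fun j _ => hsq j).sub_const 1).congr_deriv ?_
  rw [Finset.sum_sub_distrib, ← Finset.mul_sum, ← Finset.mul_sum, odecoForm]
  ring

lemma normSq_sub_one_eq (hv : IsLoadingSolution a lam v) {t : ℝ} (ht : 0 ≤ t) :
    ∑ j, v t j ^ 2 - 1 =
      (∑ j, v 0 j ^ 2 - 1) * exp (logGrowth (fun s => -2 * odecoForm a lam (v s)) t) :=
  eq_mul_exp_logGrowth (x := fun s => ∑ j, v s j ^ 2 - 1)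
    (continuousOn_const.mul hv.continuousOn_odecoForm)
    (fun _ hs => hv.hasDerivAt_normSq_sub_one hs) ht

lemma normSq_mem_uIcc (hv : IsLoadingSolution a lam v) (hodd : Odd a) (hlam : ∀ i, 0 ≤ lam i)
    {t : ℝ} (ht : 0 ≤ t) : ∑ j, v t j ^ 2 ∈ uIcc 1 (∑ j, v 0 j ^ 2) := by
  have hcont : ContinuousOn (fun s => -2 * odecoForm a lam (v s)) (Ici 0) :=
    continuousOn_const.mul hv.continuousOn_odecoForm
  have hG : logGrowth (fun s => -2 * odecoForm a lam (v s)) t ≤ 0 := by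
    simpa using le_add_mul_of_hasDerivAt_le (C := 0) (fun s hs => hasDerivAt_logGrowth hcont hs)
      (fun s _ => by nlinarith [odecoForm_nonneg hodd hlam (v s)]) ht
  have he0 := exp_pos (logGrowth (fun s => -2 * odecoForm a lam (v s)) t)
  have he1 := exp_le_one_iff.2 hG
  have h := hv.normSq_sub_one_eq ht
  rw [mem_uIcc]
  rcases le_total 1 (∑ j, v 0 j ^ 2) with h1 | h1
  · left; constructor <;> nlinarith
  · right; constructor <;> nlinarith

lemma hasDerivAt_logGrowth_growthRate (hv : IsLoadingSolution a lam v) (i : ι) {t : ℝ}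
    (ht : 0 ≤ t) :
    HasDerivAt (logGrowth (growthRate a lam v i)) (growthRate a lam v i t) t :=
  _root_.hasDerivAt_logGrowth (hv.continuousOn_growthRate i) ht

lemma scaledAmp_eq_mul_exp (hv : IsLoadingSolution a lam v) (ha : a ≠ 0) (i : ι) {t : ℝ}
    (ht : 0 ≤ t) : scaledAmp a lam (v t) i =
      scaledAmp a lam (v 0) i * exp (logGrowth (growthRate a lam v i) t) := by
  rw [scaledAmp, scaledAmp, hv.eq_mul_exp ha i ht, abs_mul, abs_of_pos (exp_pos _), mul_assoc]

lemma logGrowth_growthRate_le (hv : IsLoadingSolution a lam v) (ha : 1 < a) (hodd : Odd a)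
    (hlam : ∀ i, 0 ≤ lam i) (hik : scaledAmp a lam (v 0) i < scaledAmp a lam (v 0) k) {t : ℝ}
    (ht : 0 ≤ t) : logGrowth (growthRate a lam v i) t ≤ logGrowth (growthRate a lam v k) t := by
  refine sub_nonpos.1 (nonpos_of_hasDerivAt_neg_of_eq_zero (by simp)
    (fun s hs => (hv.hasDerivAt_logGrowth_growthRate i hs).sub
      (hv.hasDerivAt_logGrowth_growthRate k hs)) (fun s hs heq => ?_) ht)
  have hamp : scaledAmp a lam (v s) i < scaledAmp a lam (v s) k := by
    rw [hv.scaledAmp_eq_mul_exp (by omega) i hs, hv.scaledAmp_eq_mul_exp (by omega) k hs,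
      sub_eq_zero.1 heq]
    gcongr
  rw [sub_neg, growthRate, growthRate, ← scaledAmp_pow ha hodd hlam (v s) i,
    ← scaledAmp_pow ha hodd hlam (v s) k]
  exact sub_lt_sub_right (pow_lt_pow_left₀ hamp (scaledAmp_nonneg (hlam i) _) (by omega)) _

lemma scaledAmp_mul_le (hv : IsLoadingSolution a lam v) (ha : 1 < a) (hodd : Odd a)
    (hlam : ∀ i, 0 ≤ lam i) (hik : scaledAmp a lam (v 0) i < scaledAmp a lam (v 0) k) {t : ℝ}
    (ht : 0 ≤ t) : scaledAmp a lam (v t) i * scaledAmp a lam (v 0) k ≤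
      scaledAmp a lam (v 0) i * scaledAmp a lam (v t) k := by
  rw [hv.scaledAmp_eq_mul_exp (by omega) i ht, hv.scaledAmp_eq_mul_exp (by omega) k ht,
    mul_right_comm, mul_assoc]
  have hi0 := scaledAmp_nonneg (a := a) (hlam i) (v 0)
  have hk0 := scaledAmp_nonneg (a := a) (hlam k) (v 0)
  gcongr
  exact hv.logGrowth_growthRate_le ha hodd hlam hik ht

lemma scaledAmp_le_of_inBasin (hv : IsLoadingSolution a lam v) (ha : 1 < a) (hodd : Odd a)
    (hlam : ∀ i, 0 ≤ lam i) (hx : InBasin a lam k (v 0)) (j : ι) {t : ℝ} (ht : 0 ≤ t) :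
    scaledAmp a lam (v t) j ≤ scaledAmp a lam (v t) k := by
  rcases eq_or_ne j k with rfl | hjk
  · exact le_rfl
  have hk0 := (scaledAmp_nonneg (hlam j) (v 0)).trans_lt (hx.2 j hjk)
  refine le_of_mul_le_mul_right ((hv.scaledAmp_mul_le ha hodd hlam (hx.2 j hjk) ht).trans ?_) hk0
  rw [mul_comm]
  exact mul_le_mul_of_nonneg_left (hx.2 j hjk).le (scaledAmp_nonneg (hlam k) _)

lemma exists_pos_le_abs (hv : IsLoadingSolution a lam v) (ha : 1 < a) (hodd : Odd a)
    (hlam : ∀ i, 0 < lam i) (hx : InBasin a lam k (v 0)) :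
    ∃ u > 0, ∀ t ≥ (0 : ℝ), u ≤ |v t k| := by
  set c : ι → ℝ := fun j => lam j ^ ((a : ℝ) - 1)⁻¹
  have hc : ∀ j, 0 < c j := fun j => rpow_pos_of_pos (hlam j) _
  set D := ∑ j, (c j)⁻¹ ^ 2
  have hD : 0 < D := Finset.sum_pos (fun j _ => pow_pos (inv_pos.2 (hc j)) 2) ⟨k, Finset.mem_univ k⟩
  set m := min 1 (∑ j, v 0 j ^ 2)
  have hm : 0 < m := lt_min one_pos <| (sq_pos_of_ne_zero hx.1).trans_le <|
    Finset.single_le_sum (f := fun j => v 0 j ^ 2) (fun _ _ => sq_nonneg _) (Finset.mem_univ k)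
  refine ⟨sqrt (m / D) / c k, div_pos (sqrt_pos.2 (div_pos hm hD)) (hc k), fun t ht => ?_⟩
  have hnorm : m ≤ (c k * |v t k|) ^ 2 * D :=
    (hv.normSq_mem_uIcc hodd (fun j => (hlam j).le) ht).1.trans <| sum_sq_le_sq_mul_sum_inv_sq hc
      fun j => hv.scaledAmp_le_of_inBasin ha hodd (fun j => (hlam j).le) hx j ht
  rw [div_le_iff₀ (hc k), mul_comm]
  calc sqrt (m / D) ≤ sqrt ((c k * |v t k|) ^ 2) := sqrt_le_sqrt ((div_le_iff₀ hD).2 hnorm)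
    _ = c k * |v t k| := sqrt_sq (mul_nonneg (hc k).le (abs_nonneg _))

lemma tendsto_normSq (hv : IsLoadingSolution a lam v) (ha : 1 < a) (hodd : Odd a)
    (hlam : ∀ i, 0 < lam i) (hx : InBasin a lam k (v 0)) :
    Tendsto (fun t => ∑ j, v t j ^ 2) atTop (𝓝 1) := by
  obtain ⟨u, hu, hle⟩ := hv.exists_pos_le_abs ha hodd hlam hx
  have hS : ∀ t ≥ (0 : ℝ), lam k * u ^ (a + 1) ≤ odecoForm a lam (v t) := fun t ht =>
    calc lam k * u ^ (a + 1) ≤ lam k * |v t k| ^ (a + 1) :=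
          mul_le_mul_of_nonneg_left (pow_le_pow_left₀ hu.le (hle t ht) _) (hlam k).le
      _ = lam k * v t k ^ (a + 1) := by rw [hodd.add_one.pow_abs]
      _ ≤ odecoForm a lam (v t) := mul_pow_le_odecoForm hodd (fun j => (hlam j).le) _ k
  have hcont : ContinuousOn (fun s => -2 * odecoForm a lam (v s)) (Ici 0) :=
    continuousOn_const.mul hv.continuousOn_odecoForm
  have hdecay := tendsto_zero_of_abs_le_mul_exp (x := fun t => ∑ j, v t j ^ 2 - 1)
    (C := |∑ j, v 0 j ^ 2 - 1|) (δ := 2 * (lam k * u ^ (a + 1))) (by have := hlam k; positivity)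
    fun t ht => by
      have hG := le_add_mul_of_hasDerivAt_le (C := -(2 * (lam k * u ^ (a + 1))))
        (fun s hs => hasDerivAt_logGrowth hcont hs)
        (fun s hs => by linarith [hS s hs]) ht
      rw [hv.normSq_sub_one_eq ht, abs_mul, abs_of_pos (exp_pos _)]
      gcongr
      simpa [neg_mul] using hG
  simpa using hdecay.add_const 1

lemma exists_logGrowth_sub_le (hv : IsLoadingSolution a lam v) (ha : 1 < a) (hodd : Odd a)
    (hlam : ∀ i, 0 < lam i) (hx : InBasin a lam k (v 0)) (hik : i ≠ k) :
    ∃ δ > 0, ∀ t ≥ (0 : ℝ),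
      logGrowth (growthRate a lam v i) t - logGrowth (growthRate a lam v k) t ≤ -(δ * t) := by
  obtain ⟨u, hu, hle⟩ := hv.exists_pos_le_abs ha hodd hlam hx
  have hlam' : ∀ i, 0 ≤ lam i := fun j => (hlam j).le
  set A := fun t j => scaledAmp a lam (v t) j
  set c := lam k ^ ((a : ℝ) - 1)⁻¹
  have hc : 0 < c := rpow_pos_of_pos (hlam k) _
  have hA0 : 0 < A 0 k := (scaledAmp_nonneg (hlam' i) _).trans_lt (hx.2 i hik)
  set ρ := A 0 i / A 0 k
  have hρ0 : 0 ≤ ρ := div_nonneg (scaledAmp_nonneg (hlam' i) _) hA0.le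
  have hρ1 : ρ ^ (a - 1) < 1 := pow_lt_one₀ hρ0 ((div_lt_one hA0).2 (hx.2 i hik)) (by omega)
  have hδ : 0 < (1 - ρ ^ (a - 1)) * (c * u) ^ (a - 1) :=
    mul_pos (sub_pos.2 hρ1) (pow_pos (mul_pos hc hu) _)
  have hderiv : ∀ s ≥ (0 : ℝ), growthRate a lam v i s - growthRate a lam v k s ≤
      -((1 - ρ ^ (a - 1)) * (c * u) ^ (a - 1)) := fun s hs => by
    have hAi : A s i ≤ ρ * A s k := by
      rw [div_mul_eq_mul_div, le_div_iff₀ hA0]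
      exact hv.scaledAmp_mul_le ha hodd hlam' (hx.2 i hik) hs
    have hpow : A s i ^ (a - 1) ≤ ρ ^ (a - 1) * A s k ^ (a - 1) := by
      rw [← mul_pow]; exact pow_le_pow_left₀ (scaledAmp_nonneg (hlam' i) _) hAi _
    have hpowk : (c * u) ^ (a - 1) ≤ A s k ^ (a - 1) :=
      pow_le_pow_left₀ (mul_nonneg hc.le hu.le) (mul_le_mul_of_nonneg_left (hle s hs) hc.le) _
    rw [growthRate, growthRate, ← scaledAmp_pow ha hodd hlam' (v s) i,
      ← scaledAmp_pow ha hodd hlam' (v s) k]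
    nlinarith
  refine ⟨_, hδ, fun t ht => ?_⟩
  have := le_add_mul_of_hasDerivAt_le (fun s hs => (hv.hasDerivAt_logGrowth_growthRate i hs).sub
    (hv.hasDerivAt_logGrowth_growthRate k hs)) hderiv ht
  simpa using this

lemma abs_le_sqrt_max (hv : IsLoadingSolution a lam v) (hodd : Odd a) (hlam : ∀ i, 0 ≤ lam i)
    (i : ι) {t : ℝ} (ht : 0 ≤ t) : |v t i| ≤ sqrt (max 1 (∑ j, v 0 j ^ 2)) :=
  abs_le_sqrt <| (Finset.single_le_sum (f := fun j => v t j ^ 2) (fun _ _ => sq_nonneg _)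
    (Finset.mem_univ i)).trans (hv.normSq_mem_uIcc hodd hlam ht).2

lemma tendsto_coord_zero (hv : IsLoadingSolution a lam v) (ha : 1 < a) (hodd : Odd a)
    (hlam : ∀ i, 0 < lam i) (hx : InBasin a lam k (v 0)) (hik : i ≠ k) :
    Tendsto (fun t => v t i) atTop (𝓝 0) := by
  obtain ⟨δ, hδ, hψ⟩ := hv.exists_logGrowth_sub_le ha hodd hlam hx hik
  refine tendsto_zero_of_abs_le_mul_exp hδ
    (C := |v 0 i| / |v 0 k| * sqrt (max 1 (∑ j, v 0 j ^ 2))) fun t ht => ?_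
  have hvk := abs_pos.2 hx.1
  calc |v t i| = |v 0 i| / |v 0 k| * |v t k| *
        exp (logGrowth (growthRate a lam v i) t - logGrowth (growthRate a lam v k) t) := by
        rw [hv.eq_mul_exp (by omega) i ht, hv.eq_mul_exp (by omega) k ht, abs_mul, abs_mul,
          abs_of_pos (exp_pos _), abs_of_pos (exp_pos _), exp_sub]
        field_simp
    _ ≤ |v 0 i| / |v 0 k| * sqrt (max 1 (∑ j, v 0 j ^ 2)) * exp (-(δ * t)) := by
        gcongr
        · exact hv.abs_le_sqrt_max hodd (fun j => (hlam j).le) k ht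
        · exact hψ t ht

lemma tendsto_abs_coord_self (hv : IsLoadingSolution a lam v) (ha : 1 < a) (hodd : Odd a)
    (hlam : ∀ i, 0 < lam i) (hx : InBasin a lam k (v 0)) :
    Tendsto (fun t => |v t k|) atTop (𝓝 1) := by
  classical
  have hsq : Tendsto (fun t => v t k ^ 2) atTop (𝓝 1) := by
    have h := (hv.tendsto_normSq ha hodd hlam hx).sub <| tendsto_finsetSum (Finset.univ.erase k)
      fun j hj => (hv.tendsto_coord_zero ha hodd hlam hx (Finset.ne_of_mem_erase hj)).pow 2
    rw [show (1 : ℝ) - ∑ j ∈ Finset.univ.erase k, (0 : ℝ) ^ 2 = 1 by simp] at h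
    refine h.congr fun t => ?_
    rw [← Finset.add_sum_erase Finset.univ (fun j => v t j ^ 2) (Finset.mem_univ k)]
    ring
  simpa [sqrt_sq_eq_abs] using hsq.sqrt

lemma tendsto_pi_single [DecidableEq ι] (hv : IsLoadingSolution a lam v) (ha : 1 < a)
    (hodd : Odd a) (hlam : ∀ i, 0 < lam i) (hx : InBasin a lam k (v 0)) :
    Tendsto v atTop (𝓝 (Pi.single k (SignType.sign (v 0 k) : ℝ))) := by
  refine tendsto_pi_nhds.2 fun i => ?_
  rcases eq_or_ne i k with rfl | hik
  · have hsign : ∀ t ≥ (0 : ℝ), (SignType.sign (v 0 i) : ℝ) * |v t i| = v t i := fun t ht => by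
      conv_rhs => rw [← sign_mul_abs (v t i)]
      rw [hv.eq_mul_exp (by omega) i ht, sign_mul, sign_pos (exp_pos _), mul_one]
    simpa using ((hv.tendsto_abs_coord_self ha hodd hlam hx).const_mul _).congr'
      ((eventually_ge_atTop 0).mono hsign)
  · simpa [Pi.single_eq_of_ne hik] using hv.tendsto_coord_zero ha hodd hlam hx hik

end IsLoadingSolution

end LoadingDynamics

theorem stmt0_general (R : ℕ) (a : ℕ) (ha : 3 ≤ a) (haodd : Odd a)
    (lam : Fin R → ℝ) (hpos : ∀ i, 0 < lam i)
    (k : Fin R) (v : ℝ → Fin R → ℝ)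
    (hode : ∀ t ≥ (0 : ℝ), ∀ i,
      HasDerivAt (fun s => v s i)
        (lam i * (v t i) ^ a - v t i * ∑ j, lam j * (v t j) ^ (a + 1)) t)
    (hk0 : v 0 k ≠ 0)
    (hbasin : ∀ i, i ≠ k →
      lam i ^ (((a : ℝ) - 1)⁻¹) * |v 0 i| < lam k ^ (((a : ℝ) - 1)⁻¹) * |v 0 k|) :
    (0 < v 0 k → Tendsto v atTop (𝓝 (Pi.single k 1))) ∧
    (v 0 k < 0 → Tendsto v atTop (𝓝 (-Pi.single k 1))) := by
  have hlim := IsLoadingSolution.tendsto_pi_single (k := k) hode (by omega) haodd hpos ⟨hk0, hbasin⟩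
  exact ⟨fun h => by simpa [sign_pos h] using hlim,
    fun h => by simpa [sign_neg h, Pi.single_neg] using hlim⟩

/-- For odd `a > 1`, the signed eigenvector `±e_k` attracts every solution of the
nonlinear Hebbian loading dynamics started in its basin of attraction. -/
theorem stmt0 (R : ℕ) (hR : 2 ≤ R) (a : ℕ) (ha : 3 ≤ a) (haodd : Odd a)
    (lam : Fin R → ℝ) (hpos : ∀ i, 0 < lam i)
    (hdist : ∀ i j : Fin R, i ≠ j → lam i ≠ lam j)
    (k : Fin R) (v : ℝ → Fin R → ℝ)
    (hode : ∀ t ≥ (0 : ℝ), ∀ i,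
      HasDerivAt (fun s => v s i)
        (lam i * (v t i) ^ a - v t i * ∑ j, lam j * (v t j) ^ (a + 1)) t)
    (hk0 : v 0 k ≠ 0)
    (hbasin : ∀ i, i ≠ k →
      lam i ^ (((a : ℝ) - 1)⁻¹) * |v 0 i| < lam k ^ (((a : ℝ) - 1)⁻¹) * |v 0 k|) :
    (0 < v 0 k → Tendsto v atTop (𝓝 (Pi.single k 1))) ∧
    (v 0 k < 0 → Tendsto v atTop (𝓝 (-Pi.single k 1))) :=
  stmt0_general R a ha haodd lam hpos k v hode hk0 hbasin
end

section
/- Let R ≥ 2 and let a ≥ 2 be an even integer. Let λ_1, …, λ_R be positive and pairwise distinct reals, and fix k ∈ {1,…,R}. Suppose v : [0,∞) → ℝ^R is a solution of the loading dynamics dv_i/dt = λ_i v_i^a − v_i ∑_{j=1}^R λ_j v_j^{a+1} whose initial condition satisfies v_k(0) > 0 and, for every i ≠ k, λ_i^{1/(a−1)} v_i(0) < λ_k^{1/(a−1)} v_k(0). Then v(t) → e_k as t → ∞. -/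
/-!
After the rescaling `u i = λ i ^ (1 / (a - 1)) * v i` the equations become
`u i' = u i ^ a - u i * S` with one common factor `S`, so the ratios `w i = u i / u k` obey the
decoupled equations `w' = w * u k ^ (a - 1) * (w ^ (a - 1) - 1)`. The basin condition says
`w i (0) < 1`, and since `a - 1` is odd the flow then drives `w i` to `0` as long as `u k` stays
bounded below. Writing `S = u k ^ (a + 1) * Q`, the amplitude obeys
`u k' = u k ^ a * (1 - Q * u k ^ 2)` with `Q → λ k ^ (-2 / (a - 1))`, which pushes `u k` to
`λ k ^ (1 / (a - 1))`, i.e. `v k` to `1`. Every limit is obtained from a drift bound: outside a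
neighbourhood of the limit the derivative is eventually bounded away from `0` with the sign
pointing towards it.
-/

open Filter Topology Set

theorem le_of_deriv_neg_on_level {f f' : ℝ → ℝ} {t₀ M : ℝ}
    (hf : ∀ t ≥ t₀, HasDerivAt f (f' t) t) (h₀ : f t₀ ≤ M)
    (hM : ∀ t ≥ t₀, f t = M → f' t < 0) : ∀ t ≥ t₀, f t ≤ M := fun _ ht =>
  image_le_of_deriv_right_lt_deriv_boundary' (B := fun _ => M) (B' := fun _ => 0)
    (fun s hs => (hf s hs.1).continuousAt.continuousWithinAt)
    (fun s hs => (hf s hs.1).hasDerivWithinAt) h₀ continuousOn_const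
    (fun _ _ => hasDerivWithinAt_const _ _ _) (fun s hs => hM s hs.1) ⟨ht, le_rfl⟩

theorem eventually_le_of_deriv_le_neg {f f' : ℝ → ℝ} {M c : ℝ} (hc : 0 < c)
    (hf : ∀ᶠ t in atTop, HasDerivAt f (f' t) t ∧ (M ≤ f t → f' t ≤ -c)) :
    ∀ᶠ t in atTop, f t ≤ M := by
  obtain ⟨T, hT⟩ := eventually_atTop.1 hf
  obtain ⟨T₁, hT₁, hfT₁⟩ : ∃ T₁ ≥ T, f T₁ ≤ M := by
    by_contra! hgt
    -- a slope `≤ -c` brings `f` below `M` by time `t`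
    set t := T + (f T - M) / c + 1
    have hTt : T < t := by have := div_pos (sub_pos.2 (hgt T le_rfl)) hc; linarith
    obtain ⟨s, hs, hslope⟩ := exists_hasDerivAt_eq_slope f f' hTt
      (fun s hs => (hT s hs.1).1.continuousAt.continuousWithinAt) fun s hs => (hT s hs.1.le).1
    have hs' := (hT s hs.1.le).2 (hgt s hs.1.le).le
    rw [hslope, div_le_iff₀ (sub_pos.2 hTt)] at hs'
    have hct : c * (t - T) = f T - M + c := by simp only [t]; field_simp; ring
    linarith [hgt t hTt.le]
  exact eventually_atTop.2 ⟨T₁, le_of_deriv_neg_on_level (fun t ht => (hT t (hT₁.trans ht)).1)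
    hfT₁ fun t ht heq => ((hT t (hT₁.trans ht)).2 heq.ge).trans_lt (neg_neg_of_pos hc)⟩

theorem tendsto_of_deriv_drift {f f' : ℝ → ℝ} {L : ℝ}
    (hf : ∀ᶠ t in atTop, HasDerivAt f (f' t) t)
    (hup : ∀ M > L, ∃ c > 0, ∀ᶠ t in atTop, M ≤ f t → f' t ≤ -c)
    (hlow : ∀ M < L, ∃ c > 0, ∀ᶠ t in atTop, f t ≤ M → c ≤ f' t) :
    Tendsto f atTop (𝓝 L) := by
  refine tendsto_order.2 ⟨fun a ha => ?_, fun b hb => ?_⟩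
  · obtain ⟨c, hc, h⟩ := hlow ((a + L) / 2) (by linarith)
    have hneg : ∀ᶠ t in atTop, -f t ≤ -((a + L) / 2) := by
      refine eventually_le_of_deriv_le_neg (f' := -f') hc ?_
      filter_upwards [hf, h] with t hft ht
      exact ⟨hft.neg, fun hle => by simp only [Pi.neg_apply]; linarith [ht (by linarith)]⟩
    filter_upwards [hneg] with t ht
    linarith
  · obtain ⟨c, hc, h⟩ := hup ((L + b) / 2) (by linarith)
    have hle := eventually_le_of_deriv_le_neg hc (hf.and h)
    filter_upwards [hle] with t ht
    linarith

theorem pos_of_hasDerivAt_mul_self {f g : ℝ → ℝ} (hg : ∀ t ≥ 0, ContinuousAt g t)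
    (hf : ∀ t ≥ 0, HasDerivAt f (g t * f t) t) (h₀ : 0 < f 0) : ∀ t ≥ 0, 0 < f t := by
  -- `f · exp (-∫ g)` is constant; `g` is extended to `ℝ` by `g 0` so that `∫ g` has derivative `g`
  set G : ℝ → ℝ := fun t => ∫ s in (0 : ℝ)..t, g (max s 0)
  have hG : ∀ t ≥ 0, HasDerivAt G (g t) t := fun t ht => by
    have hcont : Continuous fun s => g (max s 0) := continuous_iff_continuousAt.2 fun s =>
      (hg _ (le_max_right s 0)).comp (f := fun s => max s 0) (by fun_prop)
    simpa [max_eq_left ht] using (hcont.integral_hasStrictDerivAt 0 t).hasDerivAt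
  have hK : ∀ t ≥ 0, HasDerivAt (fun s => f s * Real.exp (-G s)) 0 t := fun t ht =>
    ((hf t ht).mul (hG t ht).neg.exp).congr_deriv (by ring)
  intro t ht
  have hconst := constant_of_has_deriv_right_zero
    (fun s hs => (hK s hs.1).continuousAt.continuousWithinAt)
    (fun s hs => (hK s hs.1).hasDerivWithinAt) t ⟨ht, le_rfl⟩
  simp only [G, intervalIntegral.integral_same, neg_zero, Real.exp_zero, mul_one] at hconst
  exact (mul_pos_iff_of_pos_right (Real.exp_pos _)).1 (hconst ▸ h₀)

section Ratio

variable {m : ℕ} {w x : ℝ → ℝ}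

theorem exists_ratio_le_of_lt_one (hm : m ≠ 0)
    (hw : ∀ t ≥ 0, HasDerivAt w (w t * (x t ^ m * (w t ^ m - 1))) t)
    (hx : ∀ t ≥ 0, 0 < x t) (h₀ : w 0 < 1) : ∃ ρ ∈ Ico (0 : ℝ) 1, ∀ t ≥ 0, w t ≤ ρ := by
  obtain ⟨ρ, hρ, hρ₁⟩ := exists_between (max_lt h₀ one_pos)
  have hρ₀ : 0 < ρ := (le_max_right _ _).trans_lt hρ
  refine ⟨ρ, ⟨hρ₀.le, hρ₁⟩, le_of_deriv_neg_on_level hw ((le_max_left _ _).trans hρ.le)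
    fun t ht hwt => ?_⟩
  rw [hwt]
  exact mul_neg_of_pos_of_neg hρ₀ (mul_neg_of_pos_of_neg (pow_pos (hx t ht) m)
    (sub_neg.2 (pow_lt_one₀ hρ₀.le hρ₁ hm)))

theorem tendsto_ratio_zero (hm : Odd m)
    (hw : ∀ t ≥ 0, HasDerivAt w (w t * (x t ^ m * (w t ^ m - 1))) t)
    {d ρ : ℝ} (hd : 0 < d) (hx : ∀ t ≥ 0, d ≤ x t) (hρ : ρ ∈ Ico (0 : ℝ) 1)
    (hwρ : ∀ t ≥ 0, w t ≤ ρ) : Tendsto w atTop (𝓝 0) := by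
  have hdm : 0 < d ^ m := pow_pos hd m
  have hxm : ∀ t ≥ 0, d ^ m ≤ x t ^ m := fun t ht => pow_le_pow_left₀ hd.le (hx t ht) m
  have hfactor : ∀ t, w t * (x t ^ m * (w t ^ m - 1)) = -(w t * x t ^ m * (1 - w t ^ m)) :=
    fun t => by ring
  refine tendsto_of_deriv_drift (eventually_atTop.2 ⟨0, hw⟩) (fun M hM => ?_) fun M hM => ?_
  · have hρm : ρ ^ m < 1 := pow_lt_one₀ hρ.1 hρ.2 hm.pos.ne'
    refine ⟨M * d ^ m * (1 - ρ ^ m), by have := sub_pos.2 hρm; positivity,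
      eventually_atTop.2 ⟨0, fun t ht hMw => ?_⟩⟩
    have hwm : w t ^ m ≤ ρ ^ m := pow_le_pow_left₀ (hM.le.trans hMw) (hwρ t ht) m
    have hgrowth : M * d ^ m ≤ w t * x t ^ m := mul_le_mul hMw (hxm t ht) hdm.le (hM.le.trans hMw)
    have := mul_le_mul hgrowth (by linarith : 1 - ρ ^ m ≤ 1 - w t ^ m) (by linarith)
      ((by positivity : 0 ≤ M * d ^ m).trans hgrowth)
    linarith [hfactor t]
  · refine ⟨-M * d ^ m, by have := neg_pos.2 hM; positivity,
      eventually_atTop.2 ⟨0, fun t ht hwM => ?_⟩⟩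
    have hwm : w t ^ m ≤ 0 := hm.pow_nonpos (hwM.trans hM.le)
    have hgrowth : -M * d ^ m ≤ -w t * x t ^ m :=
      mul_le_mul (by linarith) (hxm t ht) hdm.le (by linarith)
    have := mul_le_mul hgrowth (by linarith : 1 ≤ 1 - w t ^ m) zero_le_one
      ((by have := neg_pos.2 hM; positivity : 0 ≤ -M * d ^ m).trans hgrowth)
    linarith [hfactor t]

end Ratio

section Amplitude

variable {m : ℕ} {x Q : ℝ → ℝ}

theorem exists_pos_le_amplitude
    (hx : ∀ t ≥ 0, HasDerivAt x (x t ^ (m + 1) * (1 - Q t * x t ^ 2)) t) (h₀ : 0 < x 0)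
    {B : ℝ} (hQ : ∀ t ≥ 0, Q t ≤ B) : ∃ d > 0, ∀ t ≥ 0, d ≤ x t := by
  set d := min (x 0) (1 / (2 * max B 1))
  have hB : 1 ≤ max B 1 := le_max_right B 1
  have hd : 0 < d := lt_min h₀ (by positivity)
  have hBd : max B 1 * d ≤ 1 / 2 := by
    calc max B 1 * d ≤ max B 1 * (1 / (2 * max B 1)) := by gcongr; exact min_le_right _ _
      _ = 1 / 2 := by field_simp
  refine ⟨d, hd, fun t ht => ?_⟩
  have hneg := le_of_deriv_neg_on_level (f := fun t => -x t) (t₀ := 0) (M := -d)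
    (fun t ht => (hx t ht).neg) (neg_le_neg (min_le_left _ _)) fun t ht hxt => by
      have hxt : x t = d := neg_inj.1 hxt
      have hQd : Q t * d ^ 2 < 1 := by
        nlinarith [mul_le_mul_of_nonneg_right ((hQ t ht).trans (le_max_left B 1)) (sq_nonneg d)]
      rw [hxt, neg_lt_zero]
      exact mul_pos (pow_pos hd _) (sub_pos.2 hQd)
  exact neg_le_neg_iff.1 (hneg t ht)

theorem tendsto_amplitude
    (hx : ∀ t ≥ 0, HasDerivAt x (x t ^ (m + 1) * (1 - Q t * x t ^ 2)) t)
    {d q L : ℝ} (hd : 0 < d) (hdx : ∀ t ≥ 0, d ≤ x t) (hQ : Tendsto Q atTop (𝓝 q))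
    (hL : 0 < L) (hqL : q * L ^ 2 = 1) : Tendsto x atTop (𝓝 L) := by
  have hq : 0 < q := pos_of_mul_pos_left (hqL ▸ one_pos) (sq_nonneg L)
  have hQpos : ∀ᶠ t in atTop, 0 < Q t := hQ.eventually (lt_mem_nhds hq)
  refine tendsto_of_deriv_drift (eventually_atTop.2 ⟨0, hx⟩) (fun M hM => ?_) fun M hM => ?_
  · have hM₀ : 0 < M := hL.trans hM
    obtain ⟨r, hr₁, hr⟩ := exists_between (by gcongr : q * L ^ 2 < q * M ^ 2)
    rw [hqL] at hr₁
    have hQM : ∀ᶠ t in atTop, r < Q t * M ^ 2 := (hQ.mul_const _).eventually (lt_mem_nhds hr)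
    refine ⟨M ^ (m + 1) * (r - 1), mul_pos (pow_pos hM₀ _) (sub_pos.2 hr₁), ?_⟩
    filter_upwards [hQpos, hQM] with t hQt hQMt hMx
    have hsq : Q t * M ^ 2 ≤ Q t * x t ^ 2 := by gcongr
    have := mul_le_mul (pow_le_pow_left₀ hM₀.le hMx (m + 1))
      (by linarith : r - 1 ≤ Q t * x t ^ 2 - 1) (by linarith) (pow_pos (hM₀.trans_le hMx) _).le
    linarith
  · set M' := max M 0
    have hM' : q * M' ^ 2 < q * L ^ 2 := by
      gcongr
      exact max_lt hM hL
    obtain ⟨r, hr, hr₁⟩ := exists_between hM'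
    rw [hqL] at hr₁
    have hQM : ∀ᶠ t in atTop, Q t * M' ^ 2 < r := (hQ.mul_const _).eventually (gt_mem_nhds hr)
    refine ⟨d ^ (m + 1) * (1 - r), mul_pos (pow_pos hd _) (sub_pos.2 hr₁), ?_⟩
    filter_upwards [hQpos, hQM, eventually_ge_atTop 0] with t hQt hQMt ht hxM
    have hsq : Q t * x t ^ 2 ≤ Q t * M' ^ 2 := by
      gcongr
      exacts [(hd.trans_le (hdx t ht)).le, hxM.trans (le_max_left M 0)]
    have := mul_le_mul (pow_le_pow_left₀ hd.le (hdx t ht) (m + 1))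
      (by linarith : 1 - r ≤ 1 - Q t * x t ^ 2) (by linarith)
      (pow_pos (hd.trans_le (hdx t ht)) _).le
    linarith

end Amplitude

theorem hasDerivAt_div_of_hasDerivAt_pow_sub_mul {m : ℕ} {y z : ℝ → ℝ} {S t : ℝ}
    (hy : HasDerivAt y (y t ^ (m + 1) - y t * S) t)
    (hz : HasDerivAt z (z t ^ (m + 1) - z t * S) t) (hz₀ : z t ≠ 0) :
    HasDerivAt (fun s => y s / z s) (y t / z t * (z t ^ m * ((y t / z t) ^ m - 1))) t :=
  (hy.div hz hz₀).congr_deriv (by rw [div_pow]; field_simp; ring)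

section Rescaled

variable {ι : Type*} [Fintype ι] {m : ℕ} {b : ι → ℝ} {u : ℝ → ι → ℝ}

theorem pos_of_rescaled
    (hu : ∀ t ≥ (0 : ℝ), ∀ i, HasDerivAt (fun s => u s i)
      (u t i ^ (m + 1) - u t i * ∑ j, b j * u t j ^ (m + 2)) t)
    {k : ι} (hk₀ : 0 < u 0 k) : ∀ t ≥ 0, 0 < u t k := by
  refine pos_of_hasDerivAt_mul_self (g := fun t => u t k ^ m - ∑ j, b j * u t j ^ (m + 2))
    (fun t ht => ?_) (fun t ht => (hu t ht k).congr_deriv (by ring)) hk₀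
  have hcont : ∀ j, ContinuousAt (fun s => u s j) t := fun j => (hu t ht j).continuousAt
  exact ((hcont k).pow m).sub (tendsto_finsetSum _ fun j _ => ((hcont j).pow _).const_mul _)

theorem hasDerivAt_amplitude_of_rescaled {k : ι} {t : ℝ}
    (hu : HasDerivAt (fun s => u s k) (u t k ^ (m + 1) - u t k * ∑ j, b j * u t j ^ (m + 2)) t)
    (hk : u t k ≠ 0) : HasDerivAt (fun s => u s k)
      (u t k ^ (m + 1) * (1 - (∑ j, b j * (u t j / u t k) ^ (m + 2)) * u t k ^ 2)) t := by
  have hS : ∑ j, b j * u t j ^ (m + 2) =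
      u t k ^ (m + 2) * ∑ j, b j * (u t j / u t k) ^ (m + 2) := by
    simp only [Finset.mul_sum, div_pow]
    exact Finset.sum_congr rfl fun j _ => by field_simp
  exact hu.congr_deriv (by rw [hS]; ring)

theorem tendsto_pi_single_of_rescaled [DecidableEq ι] (hm : Odd m) (hb : ∀ i, 0 ≤ b i)
    (hu : ∀ t ≥ (0 : ℝ), ∀ i, HasDerivAt (fun s => u s i)
      (u t i ^ (m + 1) - u t i * ∑ j, b j * u t j ^ (m + 2)) t)
    {k : ι} {L : ℝ} (hL : 0 < L) (hbL : b k * L ^ 2 = 1) (hk₀ : 0 < u 0 k)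
    (hbasin : ∀ i ≠ k, u 0 i < u 0 k) : Tendsto u atTop (𝓝 (Pi.single k L)) := by
  set x : ℝ → ℝ := fun t => u t k
  set w : ι → ℝ → ℝ := fun i t => u t i / x t
  set Q : ℝ → ℝ := fun t => ∑ j, b j * w j t ^ (m + 2)
  have hx : ∀ t ≥ 0, 0 < x t := pos_of_rescaled hu hk₀
  have hxQ : ∀ t ≥ 0, HasDerivAt x (x t ^ (m + 1) * (1 - Q t * x t ^ 2)) t := fun t ht =>
    hasDerivAt_amplitude_of_rescaled (hu t ht k) (hx t ht).ne'
  have hw : ∀ i, ∀ t ≥ 0, HasDerivAt (w i) (w i t * (x t ^ m * (w i t ^ m - 1))) t :=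
    fun i t ht => hasDerivAt_div_of_hasDerivAt_pow_sub_mul (hu t ht i) (hu t ht k) (hx t ht).ne'
  have hwk : ∀ t ≥ 0, w k t = 1 := fun t ht => div_self (hx t ht).ne'
  have hwρ : ∀ i ≠ k, ∃ ρ ∈ Ico (0 : ℝ) 1, ∀ t ≥ 0, w i t ≤ ρ := fun i hi =>
    exists_ratio_le_of_lt_one hm.pos.ne' (hw i) hx ((div_lt_one hk₀).2 (hbasin i hi))
  have hw_le_one : ∀ i, ∀ t ≥ 0, w i t ≤ 1 := fun i t ht => by
    rcases eq_or_ne i k with rfl | hi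
    · exact (hwk t ht).le
    · obtain ⟨ρ, hρ, hwρ⟩ := hwρ i hi
      exact (hwρ t ht).trans hρ.2.le
  obtain ⟨d, hd, hdx⟩ := exists_pos_le_amplitude hxQ hk₀ (B := ∑ j, b j) fun t ht =>
    Finset.sum_le_sum fun j _ => mul_le_of_le_one_right (hb j)
      (((hm.add_even even_two).pow_le_pow.2 (hw_le_one j t ht)).trans_eq (one_pow _))
  have hwlim : ∀ i, Tendsto (w i) atTop (𝓝 ((Pi.single k 1 : ι → ℝ) i)) := fun i => by
    rcases eq_or_ne i k with rfl | hi
    · simpa using tendsto_const_nhds.congr' (eventually_atTop.2 ⟨0, fun t ht => (hwk t ht).symm⟩)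
    · obtain ⟨ρ, hρ, hwρ⟩ := hwρ i hi
      simpa [hi] using tendsto_ratio_zero hm (hw i) hd hdx hρ hwρ
  have hQ : Tendsto Q atTop (𝓝 (b k)) := by
    simpa [Pi.single_apply] using
      tendsto_finsetSum Finset.univ fun j _ => ((hwlim j).pow (m + 2)).const_mul (b j)
  have hxL := tendsto_amplitude hxQ hd hdx hQ hL hbL
  refine tendsto_pi_nhds.2 fun i => ?_
  have hsingle : (Pi.single k 1 : ι → ℝ) i * L = (Pi.single k L : ι → ℝ) i := by
    rcases eq_or_ne i k with rfl | hi <;> simp [*]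
  rw [← hsingle]
  exact ((hwlim i).mul hxL).congr'
    (eventually_atTop.2 ⟨0, fun t ht => div_mul_cancel₀ _ (hx t ht).ne'⟩)

end Rescaled

theorem hasDerivAt_rescaled {ι : Type*} [Fintype ι] {m : ℕ} {lam C : ι → ℝ}
    (hC : ∀ i, C i ≠ 0) (hCm : ∀ i, C i ^ m = lam i) {v : ℝ → ι → ℝ} {t : ℝ} {i : ι}
    (hv : HasDerivAt (fun s => v s i)
      (lam i * v t i ^ (m + 1) - v t i * ∑ j, lam j * v t j ^ (m + 1 + 1)) t) :
    HasDerivAt (fun s => C i * v s i) ((C i * v t i) ^ (m + 1) -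
      C i * v t i * ∑ j, (C j ^ 2)⁻¹ * (C j * v t j) ^ (m + 2)) t :=
  (hv.const_mul (C i)).congr_deriv <| by
    have hS : ∑ j, (C j ^ 2)⁻¹ * (C j * v t j) ^ (m + 2) = ∑ j, lam j * v t j ^ (m + 1 + 1) :=
      Finset.sum_congr rfl fun j _ => by rw [← hCm j]; field_simp [hC j]; ring
    rw [hS, ← hCm i]
    ring

theorem stmt1_general (R : ℕ) (a : ℕ) (ha : 2 ≤ a) (haeven : Even a)
    (lam : Fin R → ℝ) (hpos : ∀ i, 0 < lam i)
    (k : Fin R) (v : ℝ → Fin R → ℝ)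
    (hode : ∀ t ≥ (0 : ℝ), ∀ i,
      HasDerivAt (fun s => v s i)
        (lam i * (v t i) ^ a - v t i * ∑ j, lam j * (v t j) ^ (a + 1)) t)
    (hk0 : 0 < v 0 k)
    (hbasin : ∀ i, i ≠ k →
      lam i ^ (((a : ℝ) - 1)⁻¹) * v 0 i < lam k ^ (((a : ℝ) - 1)⁻¹) * v 0 k) :
    Tendsto v atTop (𝓝 (Pi.single k 1)) := by
  obtain ⟨m, rfl⟩ : ∃ m, a = m + 1 := ⟨a - 1, by omega⟩
  have hm : Odd m := Nat.not_even_iff_odd.1 (Nat.even_add_one.1 haeven)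
  set C : Fin R → ℝ := fun i => lam i ^ (((m + 1 : ℕ) : ℝ) - 1)⁻¹
  have hC : ∀ i, 0 < C i := fun i => Real.rpow_pos_of_pos (hpos i) _
  have hCm : ∀ i, C i ^ m = lam i := fun i => by
    simpa [C] using Real.rpow_inv_natCast_pow (hpos i).le hm.pos.ne'
  have hu := tendsto_pi_single_of_rescaled hm (b := fun i => (C i ^ 2)⁻¹)
    (u := fun t i => C i * v t i) (fun i => by positivity)
    (fun t ht i => hasDerivAt_rescaled (fun j => (hC j).ne') hCm (hode t ht i)) (hC k)
    (inv_mul_cancel₀ (pow_ne_zero 2 (hC k).ne')) (mul_pos (hC k) hk0) fun i hi => by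
      simpa [C, mul_comm] using hbasin i hi
  refine tendsto_pi_nhds.2 fun i => ?_
  have hvi := (tendsto_pi_nhds.1 hu i).div_const (C i)
  rcases eq_or_ne i k with rfl | hi
  · simpa [(hC i).ne'] using hvi
  · simpa [hi, (hC i).ne'] using hvi

/-- For even positive `a`, the eigenvector `e_k` attracts every solution of the
nonlinear Hebbian loading dynamics started in its basin of attraction. -/
theorem stmt1 (R : ℕ) (hR : 2 ≤ R) (a : ℕ) (ha : 2 ≤ a) (haeven : Even a)
    (lam : Fin R → ℝ) (hpos : ∀ i, 0 < lam i)
    (hdist : ∀ i j : Fin R, i ≠ j → lam i ≠ lam j)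
    (k : Fin R) (v : ℝ → Fin R → ℝ)
    (hode : ∀ t ≥ (0 : ℝ), ∀ i,
      HasDerivAt (fun s => v s i)
        (lam i * (v t i) ^ a - v t i * ∑ j, lam j * (v t j) ^ (a + 1)) t)
    (hk0 : 0 < v 0 k)
    (hbasin : ∀ i, i ≠ k →
      lam i ^ (((a : ℝ) - 1)⁻¹) * v 0 i < lam k ^ (((a : ℝ) - 1)⁻¹) * v 0 k) :
    Tendsto v atTop (𝓝 (Pi.single k 1)) :=
  stmt1_general R a ha haeven lam hpos k v hode hk0 hbasin
end

section
/- Let R ≥ 1 and let a ≥ 3 be an odd integer, and let λ_1, …, λ_R be positive reals. If v : [0,∞) → ℝ^R is a solution of the loading dynamics dv_i/dt = λ_i v_i^a − v_i ∑_{j=1}^R λ_j v_j^{a+1} with v(0) ≠ 0, then ∑_{i=1}^R v_i(t)^2 → 1 as t → ∞ (the unit sphere is a globally attracting set for the loading dynamics when a is odd). -/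
/-!
Put `n = ∑ vᵢ²` and `S = ∑ λⱼ vⱼ^(a+1)`. The dynamics give `(1 - n)' = -2 S (1 - n)`, so
`1 - n(t) = (1 - n(0)) exp(-2 ∫₀ᵗ S)`. Since `a + 1` is even, `S ≥ 0`; hence `1 - n` keeps its
sign and shrinks, which keeps `n` above `min (n(0)) 1 > 0`. By the power-mean inequality `S` is
then bounded below by a positive constant, so the exponential factor tends to zero and `n → 1`.
-/

open Filter Topology Set Real Finset

section LinearODE

variable {u g : ℝ → ℝ}

theorem eq_mul_exp_neg_integral_of_hasDerivAt (hg : ContinuousOn g (Ici 0))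
    (hu : ∀ t ≥ 0, HasDerivAt u (-(g t * u t)) t) {t : ℝ} (ht : 0 ≤ t) :
    u t = u 0 * exp (-∫ s in (0)..t, g s) := by
  -- extend `g` continuously to all of `ℝ` so that its integral is an antiderivative everywhere
  set g' : ℝ → ℝ := fun s => g (max s 0)
  have hg' : Continuous g' :=
    hg.comp_continuous (continuous_id.max continuous_const) fun s => le_max_right s 0
  have hg'g : ∀ s ≥ 0, g' s = g s := fun s hs => by simp only [g', max_eq_left hs]
  set F : ℝ → ℝ := fun t => ∫ s in (0)..t, g' s
  have hF : ∀ s, HasDerivAt F (g' s) s := fun s => (hg'.integral_hasStrictDerivAt 0 s).hasDerivAt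
  have hconst : ∀ s ≥ 0, HasDerivAt (fun s => u s * exp (F s)) 0 s := by
    intro s hs
    refine ((hu s hs).mul (hF s).exp).congr_deriv ?_
    rw [hg'g s hs]
    ring
  have hut : u t * exp (F t) = u 0 * exp (F 0) :=
    constant_of_has_deriv_right_zero (fun s hs => (hconst s hs.1).continuousAt.continuousWithinAt)
      (fun s hs => (hconst s hs.1).hasDerivWithinAt) t ⟨ht, le_rfl⟩
  have hFt : F t = ∫ s in (0)..t, g s := intervalIntegral.integral_congr fun s hs => by
    rw [uIcc_of_le ht] at hs
    exact hg'g s hs.1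
  have hF0 : F 0 = 0 := intervalIntegral.integral_same
  rw [← hFt, exp_neg, eq_mul_inv_iff_mul_eq₀ (exp_pos _).ne', hut, hF0, exp_zero, mul_one]

theorem exists_mem_Icc_eq_mul_of_hasDerivAt (hg : ContinuousOn g (Ici 0))
    (hg0 : ∀ t ≥ 0, 0 ≤ g t) (hu : ∀ t ≥ 0, HasDerivAt u (-(g t * u t)) t) {t : ℝ}
    (ht : 0 ≤ t) : ∃ c ∈ Icc (0 : ℝ) 1, u t = u 0 * c := by
  refine ⟨_, ⟨(exp_pos _).le, exp_le_one_iff.2 ?_⟩,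
    eq_mul_exp_neg_integral_of_hasDerivAt hg hu ht⟩
  exact neg_nonpos.2 (intervalIntegral.integral_nonneg ht fun s hs => hg0 s hs.1)

theorem tendsto_zero_of_hasDerivAt {δ : ℝ} (hg : ContinuousOn g (Ici 0)) (hδ : 0 < δ)
    (hgδ : ∀ t ≥ 0, δ ≤ g t) (hu : ∀ t ≥ 0, HasDerivAt u (-(g t * u t)) t) :
    Tendsto u atTop (𝓝 0) := by
  have hbound : ∀ t ≥ 0, ‖u t‖ ≤ |u 0| * exp (-(δ * t)) := fun t ht => by
    have hint : δ * t ≤ ∫ s in (0)..t, g s := by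
      have := intervalIntegral.integral_mono_on ht
        (intervalIntegrable_const (μ := MeasureTheory.volume))
        ((hg.mono fun s hs => hs.1).intervalIntegrable_of_Icc ht) fun s hs => hgδ s hs.1
      rwa [intervalIntegral.integral_const, smul_eq_mul, sub_zero, mul_comm] at this
    rw [eq_mul_exp_neg_integral_of_hasDerivAt hg hu ht, norm_mul, norm_of_nonneg (exp_pos _).le,
      Real.norm_eq_abs]
    gcongr
  have hdecay : Tendsto (fun t => |u 0| * exp (-(δ * t))) atTop (𝓝 0) := by
    simpa using (tendsto_exp_neg_atTop_nhds_zero.comp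
      (tendsto_id.const_mul_atTop hδ)).const_mul |u 0|
  exact squeeze_zero_norm' (eventually_ge_atTop 0 |>.mono hbound) hdecay

end LinearODE

theorem min_le_of_one_sub_eq_mul {x x₀ c : ℝ} (hc : c ∈ Icc (0 : ℝ) 1)
    (h : 1 - x = (1 - x₀) * c) : min x₀ 1 ≤ x := by
  rcases le_total x₀ 1 with hx₀ | hx₀
  · exact (min_le_left _ _).trans (by nlinarith [hc.2])
  · exact (min_le_right _ _).trans (by nlinarith [hc.1])

section LoadingDynamics

variable {ι : Type*} [Fintype ι] {lam : ι → ℝ}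

theorem hasDerivAt_one_sub_sum_sq {v : ℝ → ι → ℝ} {a : ℕ} {t : ℝ}
    (hv : ∀ i, HasDerivAt (fun s => v s i)
      (lam i * v t i ^ a - v t i * ∑ j, lam j * v t j ^ (a + 1)) t) :
    HasDerivAt (fun s => 1 - ∑ i, v s i ^ 2)
      (-(2 * (∑ j, lam j * v t j ^ (a + 1)) * (1 - ∑ i, v t i ^ 2))) t := by
  refine ((hasDerivAt_const t 1).sub
    (HasDerivAt.fun_sum fun i _ => (hv i).pow 2)).congr_deriv ?_
  set S := ∑ j, lam j * v t j ^ (a + 1)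
  have hterm : ∀ i, ((2 : ℕ) : ℝ) * v t i ^ (2 - 1) * (lam i * v t i ^ a - v t i * S) =
      2 * (lam i * v t i ^ (a + 1)) - 2 * S * v t i ^ 2 := fun i => by
    push_cast
    ring
  simp only [hterm, Finset.sum_sub_distrib, ← Finset.mul_sum]
  ring

theorem mul_sum_sq_pow_div_le_sum_mul_pow {l : ℝ} (hl : 0 ≤ l) (hlam : ∀ i, l ≤ lam i)
    (w : ι → ℝ) (k : ℕ) :
    l * ((∑ i, w i ^ 2) ^ (k + 1) / Fintype.card ι ^ k) ≤ ∑ i, lam i * w i ^ (2 * (k + 1)) :=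
  calc l * ((∑ i, w i ^ 2) ^ (k + 1) / Fintype.card ι ^ k)
      ≤ l * ∑ i, (w i ^ 2) ^ (k + 1) := by
        gcongr
        exact pow_sum_div_card_le_sum_pow (fun i _ => sq_nonneg (w i)) k
    _ ≤ ∑ i, lam i * w i ^ (2 * (k + 1)) := by
        simp only [Finset.mul_sum, pow_mul]
        gcongr with i
        exact hlam i

theorem exists_pos_forall_le_sum_mul_pow [Nonempty ι] (hlam : ∀ i, 0 < lam i) {μ : ℝ}
    (hμ : 0 < μ) (k : ℕ) :
    ∃ δ > 0, ∀ w : ι → ℝ, μ ≤ ∑ i, w i ^ 2 → δ ≤ ∑ i, lam i * w i ^ (2 * (k + 1)) := by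
  obtain ⟨j, hj⟩ := Finite.exists_min lam
  have hlamj := hlam j
  have hcard : (0 : ℝ) < Fintype.card ι := Nat.cast_pos.2 Fintype.card_pos
  refine ⟨lam j * (μ ^ (k + 1) / Fintype.card ι ^ k), by positivity, fun w hw => ?_⟩
  calc lam j * (μ ^ (k + 1) / Fintype.card ι ^ k)
      ≤ lam j * ((∑ i, w i ^ 2) ^ (k + 1) / Fintype.card ι ^ k) := by gcongr
    _ ≤ ∑ i, lam i * w i ^ (2 * (k + 1)) := mul_sum_sq_pow_div_le_sum_mul_pow hlamj.le hj w k

end LoadingDynamics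

theorem stmt3_general (R : ℕ) (a : ℕ) (haodd : Odd a)
    (lam : Fin R → ℝ) (hpos : ∀ i, 0 < lam i)
    (v : ℝ → Fin R → ℝ)
    (hode : ∀ t ≥ (0 : ℝ), ∀ i,
      HasDerivAt (fun s => v s i)
        (lam i * (v t i) ^ a - v t i * ∑ j, lam j * (v t j) ^ (a + 1)) t)
    (h0 : v 0 ≠ 0) :
    Tendsto (fun t => ∑ i, (v t i) ^ 2) atTop (𝓝 1) := by
  obtain ⟨k, rfl⟩ := haodd
  have hk : 2 * k + 1 + 1 = 2 * (k + 1) := by ring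
  set n : ℝ → ℝ := fun t => ∑ i, v t i ^ 2
  set S : ℝ → ℝ := fun t => ∑ j, lam j * v t j ^ (2 * k + 1 + 1)
  have hS_cont : ContinuousOn (fun t => 2 * S t) (Ici 0) := fun t ht =>
    have := fun i => (hode t ht i).continuousAt
    ContinuousAt.continuousWithinAt (by fun_prop)
  have hS_nonneg : ∀ t ≥ 0, 0 ≤ 2 * S t := fun t _ =>
    mul_nonneg zero_le_two <| Finset.sum_nonneg fun j _ =>
      mul_nonneg (hpos j).le (by rw [hk, pow_mul]; positivity)
  have hu : ∀ t ≥ 0, HasDerivAt (fun t => 1 - n t) (-(2 * S t * (1 - n t))) t := fun t ht =>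
    hasDerivAt_one_sub_sum_sq (hode t ht)
  obtain ⟨i₀, hi₀⟩ : ∃ i, v 0 i ≠ 0 := Function.ne_iff.1 h0
  have hn0 : 0 < n 0 :=
    Finset.sum_pos' (fun i _ => sq_nonneg _) ⟨i₀, Finset.mem_univ _, by positivity⟩
  have hn_lb : ∀ t ≥ 0, min (n 0) 1 ≤ n t := fun t ht => by
    obtain ⟨c, hc, hct⟩ := exists_mem_Icc_eq_mul_of_hasDerivAt hS_cont hS_nonneg hu ht
    exact min_le_of_one_sub_eq_mul hc hct
  have : Nonempty (Fin R) := ⟨i₀⟩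
  obtain ⟨δ, hδ, hδ_le⟩ := exists_pos_forall_le_sum_mul_pow hpos (lt_min hn0 one_pos) k
  have hSδ : ∀ t ≥ 0, 2 * δ ≤ 2 * S t := fun t ht => by
    simpa only [S, hk, mul_le_mul_iff_right₀ two_pos] using hδ_le (v t) (hn_lb t ht)
  simpa using (tendsto_zero_of_hasDerivAt hS_cont (mul_pos two_pos hδ) hSδ hu).const_sub 1

/-- For odd `a > 1`, the unit sphere is globally attracting for the nonlinear
Hebbian loading dynamics: the squared norm of any nonzero solution tends to 1. -/
theorem stmt3 (R : ℕ) (hR : 1 ≤ R) (a : ℕ) (ha : 3 ≤ a) (haodd : Odd a)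
    (lam : Fin R → ℝ) (hpos : ∀ i, 0 < lam i)
    (v : ℝ → Fin R → ℝ)
    (hode : ∀ t ≥ (0 : ℝ), ∀ i,
      HasDerivAt (fun s => v s i)
        (lam i * (v t i) ^ a - v t i * ∑ j, lam j * (v t j) ^ (a + 1)) t)
    (h0 : v 0 ≠ 0) :
    Tendsto (fun t => ∑ i, (v t i) ^ 2) atTop (𝓝 1) :=
  stmt3_general R a haodd lam hpos v hode h0
end

section
/- Let R ≥ 1 and let a ≥ 3 be an odd integer, and let λ_1, …, λ_R be positive reals. Suppose v ∈ ℝ^R is an equilibrium of the loading dynamics, i.e. λ_i v_i^a − v_i ∑_{j=1}^R λ_j v_j^{a+1} = 0 for all i, and v ≠ 0. Then for every index i with v_i ≠ 0, |v_i| = λ_i^{1/(1−a)} · ( ∑_{j : v_j ≠ 0} λ_j^{2/(1−a)} )^{−1/2}. -/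
open Filter Topology

/-- For odd `a > 1`, the nonzero coordinates of any nonzero equilibrium of the
nonlinear Hebbian loading dynamics are determined by the eigenvalues. -/
theorem stmt4 (R : ℕ) (hR : 1 ≤ R) (a : ℕ) (ha : 3 ≤ a) (haodd : Odd a)
    (lam : Fin R → ℝ) (hpos : ∀ i, 0 < lam i)
    (v : Fin R → ℝ)
    (heq : ∀ i, lam i * v i ^ a - v i * ∑ j, lam j * v j ^ (a + 1) = 0)
    (hv : v ≠ 0) :
    ∀ i, v i ≠ 0 →
      |v i| = lam i ^ ((1 - (a : ℝ))⁻¹) *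
        (∑ j ∈ Finset.univ.filter (fun j => v j ≠ 0),
          lam j ^ (2 / (1 - (a : ℝ)))) ^ (-(1 / 2) : ℝ) := by
  classical
  set α : ℝ := (a : ℝ) with hα
  have hα3 : (3:ℝ) ≤ α := by rw [hα]; exact_mod_cast ha
  have hαne : α - 1 ≠ 0 := by linarith
  have hαne' : 1 - α ≠ 0 := by linarith
  set S : ℝ := ∑ j, lam j * v j ^ (a + 1) with hSdef
  have heven : Even (a - 1) := by
    rcases haodd with ⟨k, hk⟩
    exact ⟨k, by omega⟩
  -- per-index identity
  have key : ∀ i, v i ≠ 0 → lam i * |v i| ^ (a - 1) = S := by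
    intro i hi
    have h := heq i
    have hpow : v i ^ a = v i * v i ^ (a - 1) := by
      rw [← pow_succ']
      congr 1
      omega
    have habs : |v i| ^ (a - 1) = v i ^ (a - 1) := heven.pow_abs _
    rw [habs]
    have hfac : v i * (lam i * v i ^ (a - 1) - S) = lam i * v i ^ a - v i * S := by
      rw [hpow]; ring
    have : v i * (lam i * v i ^ (a - 1) - S) = 0 := by rw [hfac, h]
    rcases mul_eq_zero.1 this with h' | h'
    · exact absurd h' hi
    · linarith
  obtain ⟨i0, hi0⟩ : ∃ i, v i ≠ 0 := Function.ne_iff.1 hv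
  have hSpos : 0 < S := by
    rw [← key i0 hi0]
    exact mul_pos (hpos i0) (pow_pos (abs_pos.2 hi0) _)
  have hcast : ((a - 1 : ℕ) : ℝ) = α - 1 := by
    rw [Nat.cast_sub (by omega), Nat.cast_one, hα]
  -- |v i| as rpow
  have hvi : ∀ i, v i ≠ 0 → |v i| = (S / lam i) ^ ((α - 1)⁻¹ : ℝ) := by
    intro i hi
    have h1 : |v i| ^ (a - 1) = S / lam i := by
      rw [eq_div_iff (ne_of_gt (hpos i)), mul_comm]
      exact key i hi
    have h2 : (|v i| : ℝ) ^ ((α - 1) : ℝ) = S / lam i := by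
      rw [← hcast, Real.rpow_natCast, h1]
    calc |v i| = (|v i| ^ ((α - 1) : ℝ)) ^ ((α - 1)⁻¹ : ℝ) := by
          rw [← Real.rpow_mul (abs_nonneg _), mul_inv_cancel₀ hαne, Real.rpow_one]
      _ = (S / lam i) ^ ((α - 1)⁻¹ : ℝ) := by rw [h2]
  set γ : ℝ := (α - 1)⁻¹ * (α + 1) with hγ
  set T : ℝ := ∑ j ∈ Finset.univ.filter (fun j => v j ≠ 0),
      lam j ^ (2 / (1 - α)) with hTdef
  have hSlnn : ∀ i, 0 ≤ S / lam i := fun i => le_of_lt (div_pos hSpos (hpos i))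
  -- sum identity
  have hsum : S = S ^ γ * T := by
    have h1 : S = ∑ j ∈ Finset.univ.filter (fun j => v j ≠ 0),
        lam j * v j ^ (a + 1) := by
      rw [hSdef]
      symm
      apply Finset.sum_subset (Finset.filter_subset _ _)
      intro j _ hj
      simp only [Finset.mem_filter, Finset.mem_univ, true_and, not_not] at hj
      rw [hj]
      simp
    have hterm : ∀ j ∈ Finset.univ.filter (fun j => v j ≠ 0),
        lam j * v j ^ (a + 1) = S ^ γ * lam j ^ (2 / (1 - α)) := by
      intro j hj
      simp only [Finset.mem_filter, Finset.mem_univ, true_and] at hj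
      have habs : v j ^ (a + 1) = |v j| ^ (a + 1) := by
        rcases haodd with ⟨k, hk⟩
        have hev2 : Even (a + 1) := ⟨k + 1, by omega⟩
        exact (Even.pow_abs hev2 _).symm
      rw [habs, hvi j hj, ← Real.rpow_natCast ((S / lam j) ^ ((α - 1)⁻¹ : ℝ)) (a+1),
        ← Real.rpow_mul (hSlnn j)]
      have hc2 : ((a + 1 : ℕ) : ℝ) = α + 1 := by push_cast [hα]; ring
      rw [hc2, Real.div_rpow (le_of_lt hSpos) (le_of_lt (hpos j)),
        div_eq_mul_inv, ← Real.rpow_neg (le_of_lt (hpos j))]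
      have hexp : (1:ℝ) + -((α - 1)⁻¹ * (α + 1)) = 2 / (1 - α) := by
        field_simp
        ring
      calc lam j * (S ^ ((α - 1)⁻¹ * (α + 1)) * lam j ^ (-((α - 1)⁻¹ * (α + 1))))
          = S ^ γ * (lam j ^ (1:ℝ) * lam j ^ (-((α - 1)⁻¹ * (α + 1)))) := by
            rw [Real.rpow_one, hγ]; ring
        _ = S ^ γ * lam j ^ ((1:ℝ) + -((α - 1)⁻¹ * (α + 1))) := by
            rw [← Real.rpow_add (hpos j)]
        _ = S ^ γ * lam j ^ (2 / (1 - α)) := by rw [hexp]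
    calc S = ∑ j ∈ Finset.univ.filter (fun j => v j ≠ 0), lam j * v j ^ (a + 1) := h1
      _ = ∑ j ∈ Finset.univ.filter (fun j => v j ≠ 0), S ^ γ * lam j ^ (2 / (1 - α)) :=
          Finset.sum_congr rfl hterm
      _ = S ^ γ * T := by rw [hTdef, Finset.mul_sum]
  have hTpos : 0 < T := by
    rw [hTdef]
    apply Finset.sum_pos
    · intro j _
      exact Real.rpow_pos_of_pos (hpos j) _
    · exact ⟨i0, Finset.mem_filter.2 ⟨Finset.mem_univ _, hi0⟩⟩
  have hT : T = S ^ (2 / (1 - α)) := by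
    have h1 : T = S ^ (1 - γ : ℝ) := by
      rw [Real.rpow_sub hSpos, Real.rpow_one]
      rw [eq_div_iff (ne_of_gt (Real.rpow_pos_of_pos hSpos _))]
      linarith [hsum]
    rw [h1]
    congr 1
    rw [hγ]
    field_simp
    ring
  intro i hi
  rw [hvi i hi, hT, ← Real.rpow_mul (le_of_lt hSpos),
    Real.div_rpow (le_of_lt hSpos) (le_of_lt (hpos i)),
    div_eq_mul_inv, ← Real.rpow_neg (le_of_lt (hpos i))]
  have he1 : (-(α - 1)⁻¹ : ℝ) = (1 - α)⁻¹ := by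
    rw [neg_inv]; congr 1; ring
  have he2 : (2 / (1 - α) * (-(1 / 2)) : ℝ) = (α - 1)⁻¹ := by
    field_simp
    ring
  rw [he1, he2, hα]
  ring
end

section
/- Let R ≥ 1, let a ≥ 3 be an odd integer, let λ_1, …, λ_R be positive reals, fix k ∈ {1,…,R}, and set C_i = (λ_k/λ_i)^{1/(a−1)} for each i. Then for every x > 0, the R-dimensional Lebesgue measure of the set { v ∈ ℝ^R : |v_k| < x and for every i ≠ k, λ_i^{1/(a−1)} |v_i| < λ_k^{1/(a−1)} |v_k| } equals (2x)^R · R^{−1} · ∏_{i=1}^R C_i. In particular, the volume of the basin of attraction of the k-th eigenvector, relative to the hypercube [−x,x]^R, is R^{−1} ∏_{i=1}^R (λ_k/λ_i)^{1/(a−1)}. -/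
open Filter Topology MeasureTheory

/-- For odd `a > 1`, the Lebesgue volume of the part of the basin of attraction of the
`k`-th eigenvector lying over `|v_k| < x` equals `(2x)^R · R⁻¹ · ∏ᵢ (λ_k/λ_i)^{1/(a-1)}`. -/
theorem stmt5 (R : ℕ) (hR : 1 ≤ R) (a : ℕ) (ha : 3 ≤ a) (haodd : Odd a)
    (lam : Fin R → ℝ) (hpos : ∀ i, 0 < lam i)
    (k : Fin R) (x : ℝ) (hx : 0 < x) :
    volume {v : Fin R → ℝ | |v k| < x ∧ ∀ i, i ≠ k →
        lam i ^ (((a : ℝ) - 1)⁻¹) * |v i| < lam k ^ (((a : ℝ) - 1)⁻¹) * |v k|}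
      = ENNReal.ofReal
        ((2 * x) ^ R * (R : ℝ)⁻¹ * ∏ i, (lam k / lam i) ^ (((a : ℝ) - 1)⁻¹)) := by
  obtain ⟨n, rfl⟩ : ∃ n, R = n + 1 := ⟨R - 1, by omega⟩
  set p : ℝ := ((a : ℝ) - 1)⁻¹ with hp
  set c : Fin (n + 1) → ℝ := fun i => (lam k / lam i) ^ p with hcdef
  have hc : ∀ i, 0 < c i := fun i => Real.rpow_pos_of_pos (div_pos (hpos k) (hpos i)) _
  have hck : c k = 1 := by
    simp [hcdef, div_self (hpos k).ne']
  have hiff : ∀ (i : Fin (n + 1)) (t u : ℝ),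
      (lam i ^ p * |u| < lam k ^ p * |t|) ↔ |u| < c i * |t| := by
    intro i t u
    have hco : c i = (lam k / lam i) ^ p := rfl
    rw [hco, Real.div_rpow (hpos k).le (hpos i).le, div_mul_eq_mul_div,
      lt_div_iff₀ (Real.rpow_pos_of_pos (hpos i) p), mul_comm (|u|) _]
  -- the target set as preimage under piFinSuccAbove
  set T : Set (ℝ × (Fin n → ℝ)) :=
    {q | |q.1| < x ∧ ∀ j, |q.2 j| < c (k.succAbove j) * |q.1|} with hT
  have hTmeas : MeasurableSet T := by
    have hTeq : T = {q : ℝ × (Fin n → ℝ) | |q.1| < x} ∩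
        ⋂ j, {q : ℝ × (Fin n → ℝ) | |q.2 j| < c (k.succAbove j) * |q.1|} := by
      ext q
      simp [hT, Set.mem_iInter]
    rw [hTeq]
    exact (measurableSet_lt measurable_fst.abs measurable_const).inter
      (MeasurableSet.iInter fun j => measurableSet_lt
        (by fun_prop : Measurable fun q : ℝ × (Fin n → ℝ) => |q.2 j|)
        (measurable_const.mul measurable_fst.abs))
  have hset : {v : Fin (n + 1) → ℝ | |v k| < x ∧ ∀ i, i ≠ k →
      lam i ^ p * |v i| < lam k ^ p * |v k|}
      = (MeasurableEquiv.piFinSuccAbove (fun _ => ℝ) k) ⁻¹' T := by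
    ext v
    simp only [Set.mem_setOf_eq, Set.mem_preimage, hT,
      MeasurableEquiv.piFinSuccAbove_apply, Fin.insertNthEquiv_symm_apply,
      Fin.removeNth]
    constructor
    · rintro ⟨h1, h2⟩
      refine ⟨h1, fun j => ?_⟩
      exact (hiff _ _ _).mp (h2 _ (Fin.succAbove_ne k j))
    · rintro ⟨h1, h2⟩
      refine ⟨h1, fun i hi => ?_⟩
      obtain ⟨j, rfl⟩ := Fin.exists_succAbove_eq hi
      exact (hiff _ _ _).mpr (h2 j)
  rw [hset, (volume_preserving_piFinSuccAbove (fun _ : Fin (n + 1) => ℝ) k).measure_preimage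
    hTmeas.nullMeasurableSet]
  rw [MeasureTheory.Measure.volume_eq_prod, Measure.prod_apply hTmeas]
  -- the fiber measure
  have hsec : ∀ t : ℝ, (volume : Measure (Fin n → ℝ)) (Prod.mk t ⁻¹' T)
      = Set.indicator (Set.Ioo (-x) x)
        (fun t => ENNReal.ofReal ((∏ j : Fin n, (2 * c (k.succAbove j))) * |t| ^ n)) t := by
    intro t
    by_cases ht : |t| < x
    · rw [Set.indicator_of_mem (by rw [Set.mem_Ioo, ← abs_lt]; exact ht)]
      have : Prod.mk t ⁻¹' T = Set.pi Set.univ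
          (fun j : Fin n => Set.Ioo (-(c (k.succAbove j) * |t|)) (c (k.succAbove j) * |t|)) := by
        ext w
        simp only [Set.mem_preimage, hT, Set.mem_setOf_eq, Set.mem_pi, Set.mem_univ,
          forall_true_left, Set.mem_Ioo, ht, true_and]
        exact forall_congr' fun j => abs_lt
      rw [this, volume_pi_pi]
      have h2 : ∀ j : Fin n,
          (volume : Measure ℝ) (Set.Ioo (-(c (k.succAbove j) * |t|)) (c (k.succAbove j) * |t|))
          = ENNReal.ofReal (2 * c (k.succAbove j) * |t|) := by
        intro j
        rw [Real.volume_Ioo]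
        ring_nf
      simp_rw [h2]
      rw [← ENNReal.ofReal_prod_of_nonneg (fun j _ =>
        mul_nonneg (mul_nonneg (by norm_num) (hc _).le) (abs_nonneg t))]
      congr 1
      rw [Finset.prod_mul_distrib, Finset.prod_const, Finset.card_univ, Fintype.card_fin]
    · rw [Set.indicator_of_notMem (by rw [Set.mem_Ioo, ← abs_lt]; exact ht)]
      have : Prod.mk t ⁻¹' T = ∅ := by
        ext w
        simp [hT, ht]
      simp [this]
  simp_rw [hsec]
  rw [lintegral_indicator measurableSet_Ioo,
    Measure.restrict_congr_set Ioo_ae_eq_Ioc]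
  set K : ℝ := ∏ j : Fin n, (2 * c (k.succAbove j)) with hK
  have hKpos : 0 < K := Finset.prod_pos fun j _ => mul_pos two_pos (hc _)
  have hcont : Continuous (fun t : ℝ => K * |t| ^ n) :=
    continuous_const.mul (continuous_abs.pow n)
  rw [← ofReal_integral_eq_lintegral_ofReal
    (hcont.integrableOn_Icc.mono_set Set.Ioc_subset_Icc_self)
    (Filter.Eventually.of_forall fun t => mul_nonneg hKpos.le (pow_nonneg (abs_nonneg t) n))]
  have hle : -x ≤ x := by linarith
  rw [← intervalIntegral.integral_of_le hle]
  have hint : ∫ t in (-x)..x, K * |t| ^ n = K * (2 * (x ^ (n + 1) / (n + 1))) := by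
    rw [intervalIntegral.integral_const_mul]
    congr 1
    have hii : ∀ u v : ℝ, IntervalIntegrable (fun t : ℝ => |t| ^ n) volume u v :=
      fun u v => (continuous_abs.pow n).intervalIntegrable u v
    have hsplit : ∫ t in (-x)..x, |t| ^ n
        = (∫ t in (-x)..(0:ℝ), |t| ^ n) + ∫ t in (0:ℝ)..x, |t| ^ n :=
      (intervalIntegral.integral_add_adjacent_intervals (hii _ _) (hii _ _)).symm
    have hneg : (∫ t in (-x)..(0:ℝ), |t| ^ n) = ∫ t in (0:ℝ)..x, |t| ^ n := by
      have := intervalIntegral.integral_comp_neg (a := (0:ℝ)) (b := x)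
        (fun t : ℝ => |t| ^ n)
      simp only [abs_neg, neg_zero] at this
      exact this.symm
    have hpos' : (∫ t in (0:ℝ)..x, |t| ^ n) = ∫ t in (0:ℝ)..x, t ^ n := by
      apply intervalIntegral.integral_congr
      intro t ht
      rw [Set.uIcc_of_le (by linarith : (0:ℝ) ≤ x)] at ht
      show |t| ^ n = t ^ n
      rw [abs_of_nonneg ht.1]
    rw [hsplit, hneg, hpos', integral_pow]
    ring
  rw [hint]
  congr 1
  have hprod : (∏ i : Fin (n + 1), c i) = ∏ j : Fin n, c (k.succAbove j) := by
    rw [Fin.prod_univ_succAbove (fun i => c i) k, hck, one_mul]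
  have hK2 : K = 2 ^ n * ∏ j : Fin n, c (k.succAbove j) := by
    rw [hK, Finset.prod_mul_distrib, Finset.prod_const, Finset.card_univ, Fintype.card_fin]
  rw [hK2, ← hprod]
  have hcast : ((n : ℝ) + 1) = ((n + 1 : ℕ) : ℝ) := by push_cast; ring
  rw [hcast]
  field_simp
  ring
end

section
/- Let R ≥ 1, let a ≥ 2 be an even integer, let λ_1, …, λ_R be positive reals, fix k ∈ {1,…,R}, and set C_i = (λ_k/λ_i)^{1/(a−1)} for each i ≠ k. Then for every x > 0, the R-dimensional Lebesgue measure of the set { v ∈ ℝ^R : 0 < v_k < x and for every i ≠ k, −x < v_i < C_i v_k } equals x^R · ∑_{T ⊆ {1,…,R}\{k}} ( ∏_{i∈T} C_i ) / (|T| + 1), where the sum runs over all subsets T of {1,…,R}\{k}. -/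
/-! Slice along the `k`-th coordinate: for `v k = t ∈ (0, x)` the other coordinates range over
the box `∏_{i ≠ k} (-x, C i * t)`, of volume `∏_{i ≠ k} (C i * t + x)`. Expanding this product
over subsets `T` and integrating `t ^ |T| * x ^ (R - 1 - |T|)` over `(0, x)` contributes
`x ^ R / (|T| + 1)` for each `T`. -/

open MeasureTheory

theorem Finset.prod_mul_add_eq_sum_powerset {ι R : Type*} [DecidableEq ι] [CommSemiring R]
    (s : Finset ι) (c : ι → R) (t x : R) :
    ∏ i ∈ s, (c i * t + x)
      = ∑ T ∈ s.powerset, (∏ i ∈ T, c i) * t ^ T.card * x ^ (s.card - T.card) := by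
  rw [Finset.prod_add]
  refine Finset.sum_congr rfl fun T hT => ?_
  rw [Finset.prod_const, Finset.prod_mul_distrib, Finset.prod_const,
    Finset.card_sdiff_of_subset (Finset.mem_powerset.mp hT)]

theorem integral_prod_mul_add {ι : Type*} [DecidableEq ι] (s : Finset ι) (c : ι → ℝ) (x : ℝ) :
    ∫ t in (0 : ℝ)..x, ∏ i ∈ s, (c i * t + x)
      = x ^ (s.card + 1) * ∑ T ∈ s.powerset, (∏ i ∈ T, c i) / ((T.card : ℝ) + 1) := by
  simp_rw [Finset.prod_mul_add_eq_sum_powerset, Finset.mul_sum]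
  rw [intervalIntegral.integral_finsetSum fun T _ =>
    (by fun_prop : Continuous _).intervalIntegrable _ _]
  refine Finset.sum_congr rfl fun T hT => ?_
  have hpow : x ^ (s.card - T.card) * x ^ (T.card + 1) = x ^ (s.card + 1) := by
    have := Finset.card_le_card (Finset.mem_powerset.mp hT)
    rw [← pow_add]
    congr 1
    omega
  simp_rw [mul_right_comm _ _ (x ^ _)]
  rw [intervalIntegral.integral_const_mul, integral_pow, ← hpow]
  ring

theorem lintegral_Ioo_ofReal_eq_ofReal_intervalIntegral {a b : ℝ} (hab : a ≤ b) {f : ℝ → ℝ}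
    (hf : IntervalIntegrable f volume a b) (h0 : ∀ t ∈ Set.Ioo a b, 0 ≤ f t) :
    ∫⁻ t in Set.Ioo a b, ENNReal.ofReal (f t) = ENNReal.ofReal (∫ t in a..b, f t) := by
  rw [intervalIntegral.integral_of_le hab, integral_Ioc_eq_integral_Ioo,
    ofReal_integral_eq_lintegral_ofReal ((intervalIntegrable_iff_integrableOn_Ioo_of_le hab).mp hf)
      ((ae_restrict_iff' measurableSet_Ioo).mpr (.of_forall h0))]

theorem Fin.prod_univ_erase {M : Type*} [CommMonoid M] {n : ℕ} (k : Fin (n + 1))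
    (f : Fin (n + 1) → M) :
    ∏ i ∈ Finset.univ.erase k, f i = ∏ j, f (k.succAbove j) := by
  rw [← Finset.compl_singleton, ← Fin.image_succAbove_univ,
    Finset.prod_image Fin.succAbove_right_injective.injOn]

theorem volume_setOf_mem_and_forall_ne_mem_Ioo {n : ℕ} (k : Fin (n + 1)) {s : Set ℝ}
    (hs : MeasurableSet s) {l u : Fin (n + 1) → ℝ → ℝ} (hl : ∀ i, Measurable (l i))
    (hu : ∀ i, Measurable (u i)) :
    volume {v : Fin (n + 1) → ℝ | v k ∈ s ∧ ∀ i ≠ k, v i ∈ Set.Ioo (l i (v k)) (u i (v k))}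
      = ∫⁻ t in s, ∏ i ∈ Finset.univ.erase k, ENNReal.ofReal (u i t - l i t) := by
  set A : Set (ℝ × (Fin n → ℝ)) := Prod.fst ⁻¹' s ∩
    ⋂ j, {p | p.2 j ∈ Set.Ioo (l (k.succAbove j) p.1) (u (k.succAbove j) p.1)}
  have hpre : {v : Fin (n + 1) → ℝ | v k ∈ s ∧ ∀ i ≠ k, v i ∈ Set.Ioo (l i (v k)) (u i (v k))}
      = MeasurableEquiv.piFinSuccAbove (fun _ => ℝ) k ⁻¹' A := by
    ext v
    simp [A, Fin.forall_iff_succAbove k, Fin.succAbove_ne, Fin.removeNth]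
  have hA : MeasurableSet A := by
    have hv (j : Fin n) : Measurable fun p : ℝ × (Fin n → ℝ) => p.2 j := by fun_prop
    exact measurable_fst hs |>.inter <| .iInter fun j =>
      (measurableSet_lt ((hl _).comp measurable_fst) (hv j)).inter
        (measurableSet_lt (hv j) ((hu _).comp measurable_fst))
  have hslice (t : ℝ) : volume (Prod.mk t ⁻¹' A) = s.indicator
      (fun t => ∏ j, ENNReal.ofReal (u (k.succAbove j) t - l (k.succAbove j) t)) t := by
    by_cases ht : t ∈ s
    · have hbox : Prod.mk t ⁻¹' A
          = Set.univ.pi fun j => Set.Ioo (l (k.succAbove j) t) (u (k.succAbove j) t) := by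
        ext
        simp [A, ht]
      simp [hbox, ht, volume_pi_pi]
    · have hempty : Prod.mk t ⁻¹' A = ∅ := by
        ext
        simp [A, ht]
      simp [hempty, ht]
  rw [hpre, (volume_preserving_piFinSuccAbove (fun _ => ℝ) k).measure_preimage_equiv,
    Measure.volume_eq_prod, Measure.prod_apply hA]
  simp_rw [hslice, Fin.prod_univ_erase]
  exact lintegral_indicator hs _

theorem stmt6_general (R : ℕ) (a : ℕ)
    (lam : Fin R → ℝ) (hpos : ∀ i, 0 < lam i)
    (k : Fin R) (x : ℝ) (hx : 0 < x) :
    volume {v : Fin R → ℝ | 0 < v k ∧ v k < x ∧ ∀ i, i ≠ k →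
        -x < v i ∧ v i < (lam k / lam i) ^ (((a : ℝ) - 1)⁻¹) * v k}
      = ENNReal.ofReal
        (x ^ R * ∑ T ∈ (Finset.univ.erase k).powerset,
          (∏ i ∈ T, (lam k / lam i) ^ (((a : ℝ) - 1)⁻¹)) / ((T.card : ℝ) + 1)) := by
  obtain ⟨n, rfl⟩ := Nat.exists_eq_add_one.mpr k.pos
  set C : Fin (n + 1) → ℝ := fun i => (lam k / lam i) ^ (((a : ℝ) - 1)⁻¹)
  have hfactor (i : Fin (n + 1)) {t : ℝ} (ht : t ∈ Set.Ioo 0 x) : 0 ≤ C i * t + x := by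
    have := hpos k; have := hpos i; have := ht.1
    positivity
  have hset : {v : Fin (n + 1) → ℝ | 0 < v k ∧ v k < x ∧ ∀ i, i ≠ k → -x < v i ∧ v i < C i * v k}
      = {v | v k ∈ Set.Ioo 0 x ∧ ∀ i ≠ k, v i ∈ Set.Ioo (-x) (C i * v k)} := by
    simp only [Set.mem_Ioo, and_assoc]
  have hprod : ∀ t ∈ Set.Ioo 0 x, ∏ i ∈ Finset.univ.erase k, ENNReal.ofReal (C i * t - -x)
      = ENNReal.ofReal (∏ i ∈ Finset.univ.erase k, (C i * t + x)) := fun t ht => by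
    simp_rw [sub_neg_eq_add]
    exact (ENNReal.ofReal_prod_of_nonneg fun i _ => hfactor i ht).symm
  rw [hset, volume_setOf_mem_and_forall_ne_mem_Ioo (l := fun _ _ => -x) (u := fun i t => C i * t)
      k measurableSet_Ioo (fun _ => measurable_const) (fun i => measurable_const_mul (C i)),
    setLIntegral_congr_fun measurableSet_Ioo hprod,
    lintegral_Ioo_ofReal_eq_ofReal_intervalIntegral hx.le
      ((by fun_prop : Continuous _).intervalIntegrable _ _)
      fun t ht => Finset.prod_nonneg fun i _ => hfactor i ht,
    integral_prod_mul_add, Finset.card_erase_of_mem (Finset.mem_univ k), Finset.card_univ,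
    Fintype.card_fin, Nat.add_sub_cancel]

/-- For even `a`, the Lebesgue volume of the truncated basin of attraction of the
`k`-th eigenvector equals `x^R · ∑_{T ⊆ [R]\{k}} (∏_{i∈T} C_i)/(|T|+1)`. -/
theorem stmt6 (R : ℕ) (hR : 1 ≤ R) (a : ℕ) (ha : 2 ≤ a) (haeven : Even a)
    (lam : Fin R → ℝ) (hpos : ∀ i, 0 < lam i)
    (k : Fin R) (x : ℝ) (hx : 0 < x) :
    volume {v : Fin R → ℝ | 0 < v k ∧ v k < x ∧ ∀ i, i ≠ k →
        -x < v i ∧ v i < (lam k / lam i) ^ (((a : ℝ) - 1)⁻¹) * v k}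
      = ENNReal.ofReal
        (x ^ R * ∑ T ∈ (Finset.univ.erase k).powerset,
          (∏ i ∈ T, (lam k / lam i) ^ (((a : ℝ) - 1)⁻¹)) / ((T.card : ℝ) + 1)) :=
  stmt6_general R a lam hpos k x hx
end

section
/- Let R ≥ 1, N ≥ 1, let a_1, …, a_N ≥ 2 be integers, and let λ_{m i} (1 ≤ m ≤ N, 1 ≤ i ≤ R) be reals. Let L(v) = ∑_{m=1}^N ∑_{j=1}^R λ_{m j} v_j^{a_m+1} and let G(v)_i = ∑_{m=1}^N λ_{m i} v_i^{a_m} − v_i L(v). Then along any differentiable solution v : [0,∞) → ℝ^R of dv/dt = G(v), the squared norm S(t) = ∑_{i=1}^R v_i(t)^2 satisfies (1/2) dS/dt = L(v(t)) (1 − S(t)) for all t ≥ 0. -/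
/-! The loading field has the Oja form `G(v)_i = F_i(v) - v_i L(v)` with `∑ i, v_i F_i(v) = L(v)`,
so `(1/2) dS/dt = ⟪v, G(v)⟫ = L(v) - L(v) S`. -/

theorem hasDerivAt_sum_sq {ι : Type*} [Fintype ι] {v : ℝ → ι → ℝ} {v' : ι → ℝ} {t : ℝ}
    (hv : ∀ i, HasDerivAt (fun s => v s i) (v' i) t) :
    HasDerivAt (fun s => ∑ i, v s i ^ 2) (2 * ∑ i, v t i * v' i) t := by
  rw [Finset.mul_sum]
  exact HasDerivAt.fun_sum fun i _ => ((hv i).fun_pow 2).congr_deriv (by push_cast; ring)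

theorem sum_mul_sub_mul_eq {ι : Type*} [Fintype ι] (x F : ι → ℝ) (L : ℝ)
    (hF : ∑ i, x i * F i = L) :
    ∑ i, x i * (F i - x i * L) = L * (1 - ∑ i, x i ^ 2) := by
  simp only [mul_sub, Finset.sum_sub_distrib, hF, mul_one, Finset.mul_sum]
  congr 1
  exact Finset.sum_congr rfl fun i _ => by ring

theorem sum_mul_sum_pow_eq {ι κ : Type*} [Fintype ι] [Fintype κ] (x : ι → ℝ) (lam : κ → ι → ℝ)
    (a : κ → ℕ) :
    ∑ i, x i * ∑ m, lam m i * x i ^ a m = ∑ m, ∑ j, lam m j * x j ^ (a m + 1) := by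
  simp only [Finset.mul_sum]
  rw [Finset.sum_comm]
  exact Finset.sum_congr rfl fun m _ => Finset.sum_congr rfl fun j _ => by ring

theorem stmt10_general (R N : ℕ)
    (a : Fin N → ℕ)
    (lam : Fin N → Fin R → ℝ)
    (v : ℝ → Fin R → ℝ)
    (hode : ∀ t ≥ (0 : ℝ), ∀ i,
      HasDerivAt (fun s => v s i)
        ((∑ m, lam m i * (v t i) ^ (a m))
          - v t i * ∑ m, ∑ j, lam m j * (v t j) ^ (a m + 1)) t) :
    ∀ t ≥ (0 : ℝ),
      HasDerivAt (fun s => ∑ i, (v s i) ^ 2)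
        (2 * ((∑ m, ∑ j, lam m j * (v t j) ^ (a m + 1)) * (1 - ∑ i, (v t i) ^ 2))) t := by
  intro t ht
  rw [← sum_mul_sub_mul_eq (v t) _ _ (sum_mul_sum_pow_eq (v t) lam a)]
  exact hasDerivAt_sum_sq (hode t ht)

/-- Along any solution of the multi-term loading dynamics, the squared norm `S`
satisfies `(1/2) dS/dt = L(v) (1 - S)`, i.e. `dS/dt = 2 L(v) (1 - S)`. -/
theorem stmt10 (R N : ℕ) (hR : 1 ≤ R) (hN : 1 ≤ N)
    (a : Fin N → ℕ) (ha : ∀ m, 2 ≤ a m)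
    (lam : Fin N → Fin R → ℝ)
    (v : ℝ → Fin R → ℝ)
    (hode : ∀ t ≥ (0 : ℝ), ∀ i,
      HasDerivAt (fun s => v s i)
        ((∑ m, lam m i * (v t i) ^ (a m))
          - v t i * ∑ m, ∑ j, lam m j * (v t j) ^ (a m + 1)) t) :
    ∀ t ≥ (0 : ℝ),
      HasDerivAt (fun s => ∑ i, (v s i) ^ 2)
        (2 * ((∑ m, ∑ j, lam m j * (v t j) ^ (a m + 1)) * (1 - ∑ i, (v t i) ^ 2))) t :=
  stmt10_general R N a lam v hode
end

section
/- Let R ≥ 1, N ≥ 1, let a_1, …, a_N ≥ 2 be integers, and let λ_{m i} ≥ 0 be reals with ∑_{m=1}^N λ_{m k} > 0 for the fixed index k ∈ {1,…,R}. Let L(v) = ∑_{m=1}^N ∑_{j=1}^R λ_{m j} v_j^{a_m+1} and G(v)_i = ∑_{m=1}^N λ_{m i} v_i^{a_m} − v_i L(v). Then e_k is an equilibrium of G (G(e_k) = 0), G is differentiable at e_k, and its derivative at e_k is the diagonal linear map with entry −2 ∑_{m=1}^N λ_{m k} in the k-th diagonal position and entry −∑_{m=1}^N λ_{m k} in every other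 diagonal position; in particular all its eigenvalues are negative, so e_k is a linearly stable equilibrium of the multi-term loading dynamics. -/
/-!
Write `p i t = ∑ₘ λ_{mi} t ^ aₘ`, so that `G v i = p i (v i) - v i * ∑ⱼ v j * p j (v j)`.
Since every `aₘ ≥ 2`, each `p j` vanishes to second order at `0`, so to first order at `e_k`
only the coordinate `k` contributes to the normalization term `∑ⱼ v j * p j (v j)`. At position
`k` the derivative `(p k)'(1)` then enters once from `p k (v k)` and once from the normalization term and
cancels, leaving `-2 p k 1`; elsewhere only the normalization term survives, giving `-p k 1`.
-/

section LoadingField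

variable {ι : Type*} [Fintype ι] [DecidableEq ι]

def loadingField (p : ι → ℝ → ℝ) (v : ι → ℝ) : ι → ℝ :=
  fun i => p i (v i) - v i * ∑ j, v j * p j (v j)

theorem sum_single_mul_apply_single (p : ι → ℝ → ℝ) (k : ι) :
    ∑ j, (Pi.single k 1 : ι → ℝ) j * p j ((Pi.single k 1 : ι → ℝ) j) = p k 1 := by
  rw [Finset.sum_eq_single k (fun j _ hj => by simp [hj]) (by simp)]
  simp

variable {p : ι → ℝ → ℝ} {k : ι}

theorem loadingField_single (hp0 : ∀ j, j ≠ k → p j 0 = 0) :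
    loadingField p (Pi.single k 1) = 0 := by
  funext i
  simp only [loadingField, sum_single_mul_apply_single, Pi.zero_apply]
  by_cases hi : i = k
  · subst hi
    simp
  · simp [hi, hp0 i hi]

theorem hasFDerivAt_loadingField_single {d : ℝ} (hp0 : ∀ j, j ≠ k → p j 0 = 0)
    (hp' : ∀ j, j ≠ k → HasDerivAt (p j) 0 0) (hpk : HasDerivAt (p k) d 1) :
    HasFDerivAt (loadingField p)
      (ContinuousLinearMap.pi (R := ℝ) fun i =>
        (if i = k then -2 * p k 1 else -p k 1) • ContinuousLinearMap.proj i)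
      (Pi.single k 1) := by
  set e : ι → ℝ := Pi.single k 1
  set p' : ι → ℝ := fun j => if j = k then d else 0
  have hproj : ∀ j, HasFDerivAt (fun v : ι → ℝ => v j) (ContinuousLinearMap.proj (R := ℝ) j) e :=
    fun j => (ContinuousLinearMap.proj (R := ℝ) (φ := fun _ : ι => ℝ) j).hasFDerivAt
  have hp'e : ∀ j, HasDerivAt (p j) (p' j) (e j) := fun j => by
    by_cases hj : j = k
    · subst hj
      simpa [e, p'] using hpk
    · simpa [e, p', hj] using hp' j hj
  have hcoord : ∀ j,
      HasFDerivAt (fun v : ι → ℝ => p j (v j)) (p' j • ContinuousLinearMap.proj j) e :=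
    fun j => (hp'e j).comp_hasFDerivAt e (hproj j)
  have hnorm : HasFDerivAt (fun v : ι → ℝ => ∑ j, v j * p j (v j))
      ((d + p k 1) • ContinuousLinearMap.proj (R := ℝ) k) e := by
    refine (HasFDerivAt.fun_sum fun j _ => (hproj j).mul (hcoord j)).congr_fderiv ?_
    rw [Finset.sum_eq_single k (fun j _ hj => by simp [e, p', hj, hp0 j hj]) (by simp)]
    simp only [e, p', Pi.single_eq_same, if_pos rfl, one_smul, add_smul]
  refine hasFDerivAt_pi'.2 fun i =>
    ((hcoord i).sub ((hproj i).mul hnorm)).congr_fderiv ?_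
  ext h
  rw [sum_single_mul_apply_single]
  by_cases hi : i = k
  · subst hi
    simp [e, p']
    ring
  · simp [e, p', hi]

end LoadingField

section PowerSum

variable {κ : Type*} [Fintype κ] (c : κ → ℝ) {a : κ → ℕ}

theorem sum_mul_zero_pow (ha : ∀ m, a m ≠ 0) : ∑ m, c m * (0 : ℝ) ^ a m = 0 := by
  simp [zero_pow (ha _)]

theorem hasDerivAt_sum_mul_pow_zero (ha : ∀ m, 2 ≤ a m) :
    HasDerivAt (fun t : ℝ => ∑ m, c m * t ^ a m) 0 0 := by
  have hderiv := HasDerivAt.fun_sum (u := Finset.univ) fun m _ =>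
    (hasDerivAt_pow (a m) (0 : ℝ)).const_mul (c m)
  have hzero : ∀ m, (0 : ℝ) ^ (a m - 1) = 0 := fun m => zero_pow (by have := ha m; omega)
  simpa [hzero] using hderiv

end PowerSum

theorem stmt11_general (R N : ℕ)
    (a : Fin N → ℕ) (ha : ∀ m, 2 ≤ a m)
    (lam : Fin N → Fin R → ℝ)
    (k : Fin R) (hk : 0 < ∑ m, lam m k)
    (G : (Fin R → ℝ) → (Fin R → ℝ))
    (hG : G = fun v i => (∑ m, lam m i * (v i) ^ (a m))
        - v i * ∑ m, ∑ j, lam m j * (v j) ^ (a m + 1)) :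
    G (Pi.single k 1) = 0 ∧
    HasFDerivAt (𝕜 := ℝ) G
      (ContinuousLinearMap.pi fun i =>
        (if i = k then -2 * ∑ m, lam m k else -∑ m, lam m k) • ContinuousLinearMap.proj i)
      (Pi.single k 1) ∧
    ∀ i : Fin R, (if i = k then -2 * ∑ m, lam m k else -∑ m, lam m k) < 0 := by
  set p : Fin R → ℝ → ℝ := fun i t => ∑ m, lam m i * t ^ a m
  have hGp : G = loadingField p := by
    funext v i
    simp only [hG, loadingField, p, Finset.mul_sum]
    rw [Finset.sum_comm]
    simp only [pow_succ, mul_comm, mul_left_comm]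
  have hp0 : ∀ j, j ≠ k → p j 0 = 0 := fun j _ =>
    sum_mul_zero_pow _ fun m => by have := ha m; omega
  have hp' : ∀ j, j ≠ k → HasDerivAt (p j) 0 0 := fun j _ => hasDerivAt_sum_mul_pow_zero _ ha
  have hpk : HasDerivAt (p k) (deriv (p k) 1) 1 :=
    (by fun_prop : DifferentiableAt ℝ (p k) 1).hasDerivAt
  have hpk1 : p k 1 = ∑ m, lam m k := by simp [p]
  refine ⟨hGp ▸ loadingField_single hp0, ?_, fun i => ?_⟩
  · simpa only [hGp, hpk1] using hasFDerivAt_loadingField_single hp0 hp' hpk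
  · split_ifs <;> linarith

/-- `e_k` is an equilibrium of the multi-term loading vector field `G`, `G` is
differentiable there, and its derivative is the diagonal map with entry
`-2 ∑ₘ λ_{mk}` at position `k` and `-∑ₘ λ_{mk}` elsewhere; all entries are negative. -/
theorem stmt11 (R N : ℕ) (hR : 1 ≤ R) (hN : 1 ≤ N)
    (a : Fin N → ℕ) (ha : ∀ m, 2 ≤ a m)
    (lam : Fin N → Fin R → ℝ) (hnn : ∀ m i, 0 ≤ lam m i)
    (k : Fin R) (hk : 0 < ∑ m, lam m k)
    (G : (Fin R → ℝ) → (Fin R → ℝ))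
    (hG : G = fun v i => (∑ m, lam m i * (v i) ^ (a m))
        - v i * ∑ m, ∑ j, lam m j * (v j) ^ (a m + 1)) :
    G (Pi.single k 1) = 0 ∧
    HasFDerivAt (𝕜 := ℝ) G
      (ContinuousLinearMap.pi fun i =>
        (if i = k then -2 * ∑ m, lam m k else -∑ m, lam m k) • ContinuousLinearMap.proj i)
      (Pi.single k 1) ∧
    ∀ i : Fin R, (if i = k then -2 * ∑ m, lam m k else -∑ m, lam m k) < 0 :=
  stmt11_general R N a ha lam k hk G hG
end

section
/- Let K ≥ 1 and let p ≥ 1 be a real number. Consider the nonlinear Hebbian dynamics with diagonal input correlations and combined exponent a + c = 1 on ℝ^K (after rescaling time by τ/σ): dJ_i/dt = J_i (1 − ∑_{j=1}^K |J_j|^p). Then: (1) every J* ∈ ℝ^K with ∑_{j=1}^K |J*_j|^p = 1 is an equilibrium; and (2) for every differentiable solution J : [0,∞) → ℝ^K with ∑_{j=1}^K |J_j(0)|^p > 0, the quantity L(t) = ∑_{j=1}^K |J_j(t)|^p satisfies dL/dt = p L (1 − L) and L(t) → 1 as t → ∞; hence the unit ℓ^p-sphere is an attracting set of equilibria. -/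
open Filter Topology Real Set

/-!
Every `J_i` is rescaled by the same factor `1 - L`, so the chain rule for `|·|^p` (which survives
at zeros of `J_i` because `p ≥ 1`) turns the flow into the logistic equation `L' = p L (1 - L)`.
With `C = 1 / L 0 - 1`, the defect `G = L (1 + C e^{-pt}) - 1` solves the linear equation
`G' = -p L G` with `G 0 = 0`, so Grönwall gives `G ≡ 0`, i.e. `L t = 1 / (1 + C e^{-pt}) → 1`.
-/

theorem HasDerivAt.abs_rpow_of_apply_eq_zero {f : ℝ → ℝ} {t p : ℝ} (hp : 1 ≤ p)
    (hf : HasDerivAt f 0 t) (h0 : f t = 0) : HasDerivAt (fun s => |f s| ^ p) 0 t := by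
  have hsmall : ∀ᶠ s in 𝓝 t, |f s| < 1 :=
    hf.continuousAt.abs.eventually_lt continuousAt_const (by simp [h0])
  have hO : (fun s => |f s| ^ p - |f t| ^ p) =O[𝓝 t] fun s => f s - f t := by
    refine Asymptotics.IsBigO.of_bound 1 ?_
    filter_upwards [hsmall] with s hs
    rw [h0, abs_zero, zero_rpow (by linarith), sub_zero, sub_zero, one_mul, norm_eq_abs,
      norm_eq_abs, abs_of_nonneg (by positivity)]
    exact rpow_le_self_of_le_one (abs_nonneg _) hs.le hp
  rw [hasDerivAt_iff_isLittleO] at hf ⊢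
  simpa using hO.trans_isLittleO (by simpa using hf)

theorem HasDerivAt.abs_rpow_of_hasDerivAt_mul {f : ℝ → ℝ} {t p g : ℝ} (hp : 1 ≤ p)
    (hf : HasDerivAt f (f t * g) t) :
    HasDerivAt (fun s => |f s| ^ p) (p * |f t| ^ p * g) t := by
  by_cases h0 : f t = 0
  · rw [h0, abs_zero, zero_rpow (by linarith), mul_zero, zero_mul]
    exact HasDerivAt.abs_rpow_of_apply_eq_zero hp (by simpa [h0] using hf) h0
  · have habs : HasDerivAt (fun s => |f s|) (|f t| * g) t := by
      have := (hasDerivAt_abs h0).comp t hf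
      rwa [← mul_assoc, sign_mul_self] at this
    refine (habs.rpow_const (Or.inr hp)).congr_deriv ?_
    rw [rpow_sub_one (abs_ne_zero.2 h0)]
    field_simp

theorem hasDerivAt_sum_abs_rpow {ι : Type*} {x : ℝ → ι → ℝ} {s : Finset ι} {t p g : ℝ}
    (hp : 1 ≤ p) (hx : ∀ i ∈ s, HasDerivAt (fun τ => x τ i) (x t i * g) t) :
    HasDerivAt (fun τ => ∑ i ∈ s, |x τ i| ^ p) (p * (∑ i ∈ s, |x t i| ^ p) * g) t := by
  rw [Finset.mul_sum, Finset.sum_mul]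
  exact HasDerivAt.fun_sum fun i hi => (hx i hi).abs_rpow_of_hasDerivAt_mul hp

theorem eq_zero_of_hasDerivAt_smul_self {E : Type*} [NormedAddCommGroup E] [NormedSpace ℝ E]
    {G : ℝ → E} {a : ℝ → ℝ} {t₀ T : ℝ} (ha : ContinuousOn a (Icc t₀ T))
    (hG : ∀ t ∈ Icc t₀ T, HasDerivAt G (a t • G t) t) (h₀ : G t₀ = 0) :
    ∀ t ∈ Icc t₀ T, G t = 0 := by
  obtain ⟨K, hK⟩ := isCompact_Icc.exists_bound_of_continuousOn ha
  refine eq_zero_of_abs_deriv_le_mul_abs_self_of_eq_zero_right (K := K)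
    (fun t ht => (hG t ht).continuousAt.continuousWithinAt)
    (fun t ht => (hG t (Ico_subset_Icc_self ht)).hasDerivWithinAt) h₀ fun t ht => ?_
  rw [norm_smul]
  exact mul_le_mul_of_nonneg_right (hK t (Ico_subset_Icc_self ht)) (norm_nonneg _)

theorem eq_inv_of_hasDerivAt_logistic {L : ℝ → ℝ} {p : ℝ}
    (hL : ∀ t ≥ 0, HasDerivAt L (p * L t * (1 - L t)) t) (h₀ : L 0 ≠ 0) :
    ∀ t ≥ 0, L t = (1 + ((L 0)⁻¹ - 1) * exp (-(p * t)))⁻¹ := by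
  set C := (L 0)⁻¹ - 1
  set G : ℝ → ℝ := fun t => L t * (1 + C * exp (-(p * t))) - 1 with hG
  have hG' : ∀ t ≥ 0, HasDerivAt G ((-p * L t) • G t) t := by
    intro t ht
    have hexp : HasDerivAt (fun s => exp (-(p * s))) (exp (-(p * t)) * -p) t := by
      simpa using ((hasDerivAt_id t).const_mul p).neg.exp
    refine (((hL t ht).mul ((hexp.const_mul C).const_add 1)).sub_const 1).congr_deriv ?_
    simp only [hG, smul_eq_mul]
    ring
  have hG0 : G 0 = 0 := by simp [hG, C, h₀]
  intro t ht
  have hLc : ContinuousOn (fun s => -p * L s) (Icc 0 t) := fun s hs =>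
    ((hL s hs.1).continuousAt.const_mul (-p)).continuousWithinAt
  have hGt := eq_zero_of_hasDerivAt_smul_self hLc (fun s hs => hG' s hs.1) hG0 t ⟨ht, le_rfl⟩
  exact eq_inv_of_mul_eq_one_left (sub_eq_zero.1 hGt)

theorem tendsto_one_of_hasDerivAt_logistic {L : ℝ → ℝ} {p : ℝ} (hp : 0 < p)
    (hL : ∀ t ≥ 0, HasDerivAt L (p * L t * (1 - L t)) t) (h₀ : L 0 ≠ 0) :
    Tendsto L atTop (𝓝 1) := by
  have hexp : Tendsto (fun t => exp (-(p * t))) atTop (𝓝 0) :=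
    tendsto_exp_neg_atTop_nhds_zero.comp (tendsto_id.const_mul_atTop hp)
  have hlim := ((hexp.const_mul ((L 0)⁻¹ - 1)).const_add 1).inv₀ (by simp)
  rw [mul_zero, add_zero, inv_one] at hlim
  exact hlim.congr' <| (eventually_ge_atTop 0).mono fun t ht =>
    (eq_inv_of_hasDerivAt_logistic hL h₀ t ht).symm

theorem stmt14_general (K : ℕ) (p : ℝ) (hp : 1 ≤ p) :
    (∀ Js : Fin K → ℝ, (∑ j, |Js j| ^ p) = 1 →
      ∀ i, Js i * (1 - ∑ j, |Js j| ^ p) = 0) ∧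
    (∀ J : ℝ → Fin K → ℝ,
      (∀ t ≥ (0 : ℝ), ∀ i, HasDerivAt (fun s => J s i)
        (J t i * (1 - ∑ j, |J t j| ^ p)) t) →
      0 < ∑ j, |J 0 j| ^ p →
      (∀ t ≥ (0 : ℝ), HasDerivAt (fun s => ∑ j, |J s j| ^ p)
        (p * (∑ j, |J t j| ^ p) * (1 - ∑ j, |J t j| ^ p)) t) ∧
      Tendsto (fun t => ∑ j, |J t j| ^ p) atTop (𝓝 1)) := by
  refine ⟨fun Js h i => by rw [h, sub_self, mul_zero], fun J hJ hL₀ => ?_⟩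
  have hL : ∀ t ≥ (0 : ℝ), HasDerivAt (fun s => ∑ j, |J s j| ^ p)
      (p * (∑ j, |J t j| ^ p) * (1 - ∑ j, |J t j| ^ p)) t :=
    fun t ht => hasDerivAt_sum_abs_rpow hp fun i _ => hJ t ht i
  exact ⟨hL, tendsto_one_of_hasDerivAt_logistic (by linarith) hL hL₀.ne'⟩

/-- Diagonal input correlations with `a + c = 1`: every point of the unit `ℓᵖ`-sphere
is an equilibrium, and along any solution the `ℓᵖ`-mass `L` satisfies the logistic
equation `dL/dt = p L (1 - L)` and converges to 1. -/
theorem stmt14 (K : ℕ) (hK : 1 ≤ K) (p : ℝ) (hp : 1 ≤ p) :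
    (∀ Js : Fin K → ℝ, (∑ j, |Js j| ^ p) = 1 →
      ∀ i, Js i * (1 - ∑ j, |Js j| ^ p) = 0) ∧
    (∀ J : ℝ → Fin K → ℝ,
      (∀ t ≥ (0 : ℝ), ∀ i, HasDerivAt (fun s => J s i)
        (J t i * (1 - ∑ j, |J t j| ^ p)) t) →
      0 < ∑ j, |J 0 j| ^ p →
      (∀ t ≥ (0 : ℝ), HasDerivAt (fun s => ∑ j, |J s j| ^ p)
        (p * (∑ j, |J t j| ^ p) * (1 - ∑ j, |J t j| ^ p)) t) ∧
      Tendsto (fun t => ∑ j, |J t j| ^ p) atTop (𝓝 1)) :=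
  stmt14_general K p hp
end

section
/- Let K ≥ 1, let p ≥ 1 be real, and let m ≥ 2 be an even integer. Define F on ℝ^K by F(J)_i = J_i^m − J_i ∑_{j=1}^K J_j^{m−1} |J_j|^p. Let T ⊆ {1,…,K} be nonempty with n = |T| elements, let ξ : T → {−1, +1}, and let J ∈ ℝ^K be the vector with J_i = ξ_i · n^{−1/p} for i ∈ T and J_i = 0 for i ∉ T. Then F(J) = 0 if and only if ξ is constant on T (all nonzero weights share the same sign). -/
open Filter Topology

/-- Diagonal input correlations with `m = a + c` even: an `n`-sparse configuration with
nonzero weights `ξ_i · n^{-1/p}` is a steady state iff all signs `ξ_i` agree. -/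
theorem stmt15 (K : ℕ) (hK : 1 ≤ K) (p : ℝ) (hp : 1 ≤ p)
    (m : ℕ) (hm : 2 ≤ m) (hmeven : Even m)
    (F : (Fin K → ℝ) → (Fin K → ℝ))
    (hF : F = fun J i => J i ^ m - J i * ∑ j, J j ^ (m - 1) * |J j| ^ p)
    (T : Finset (Fin K)) (hT : T.Nonempty)
    (ξ : Fin K → ℝ) (hξ : ∀ i ∈ T, ξ i = 1 ∨ ξ i = -1)
    (J : Fin K → ℝ)
    (hJ : ∀ i, J i = if i ∈ T then ξ i * (T.card : ℝ) ^ (-(1 / p)) else 0) :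
    F J = 0 ↔ ∀ i ∈ T, ∀ j ∈ T, ξ i = ξ j := by
  subst hF
  have hnpos : (0:ℝ) < T.card := by exact_mod_cast hT.card_pos
  set c : ℝ := (T.card:ℝ) ^ (-(1/p)) with hc
  have hcpos : 0 < c := Real.rpow_pos_of_pos hnpos _
  have hp0 : p ≠ 0 := by linarith
  have hcp : c ^ p = (T.card:ℝ)⁻¹ := by
    rw [hc, ← Real.rpow_mul hnpos.le]
    have : -(1/p) * p = -1 := by field_simp
    rw [this, Real.rpow_neg_one]
  have hmo : Odd (m - 1) := Nat.Even.sub_odd (by omega) hmeven odd_one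
  have hS : (∑ j, J j ^ (m-1) * |J j| ^ p)
      = c ^ (m-1) * (T.card:ℝ)⁻¹ * ∑ j ∈ T, ξ j := by
    rw [← Finset.sum_subset (Finset.subset_univ T)]
    · rw [Finset.mul_sum]
      refine Finset.sum_congr rfl (fun j hj => ?_)
      rw [hJ j, if_pos hj]
      have h1 : |ξ j * c| = c := by
        rcases hξ j hj with h | h <;> simp [h, abs_of_pos hcpos]
      have h2 : ξ j ^ (m-1) = ξ j := by
        rcases hξ j hj with h | h
        · simp [h]
        · rw [h, hmo.neg_one_pow]
      rw [h1, hcp, mul_pow, h2]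
      ring
    · intro j _ hj
      rw [hJ j, if_neg hj, zero_pow (by omega), zero_mul]
  have hξm : ∀ i ∈ T, ξ i ^ m = 1 := by
    intro i hi; rcases hξ i hi with h | h <;> simp [h, hmeven.neg_one_pow]
  have hcm : c ^ m ≠ 0 := pow_ne_zero _ hcpos.ne'
  have hcc : c * c ^ (m-1) = c ^ m := by
    rw [← pow_succ']
    congr 1
    omega
  have key : ∀ i ∈ T,
      (J i ^ m - J i * ∑ j, J j ^ (m-1) * |J j| ^ p = 0)
        ↔ ξ i * ∑ j ∈ T, ξ j = (T.card : ℝ) := by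
    intro i hi
    rw [hS, hJ i, if_pos hi, mul_pow, hξm i hi, one_mul]
    have hre : ξ i * c * (c ^ (m-1) * (T.card:ℝ)⁻¹ * ∑ j ∈ T, ξ j)
        = c ^ m * (ξ i * (T.card:ℝ)⁻¹ * ∑ j ∈ T, ξ j) := by
      rw [← hcc]; ring
    rw [hre]
    constructor
    · intro h
      have h1 : c ^ m * (1 - ξ i * (T.card:ℝ)⁻¹ * ∑ j ∈ T, ξ j) = 0 := by
        rw [mul_sub, mul_one]; linarith
      have h2 : ξ i * (T.card:ℝ)⁻¹ * ∑ j ∈ T, ξ j = 1 := by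
        rcases mul_eq_zero.mp h1 with h' | h'
        · exact absurd h' hcm
        · linarith
      field_simp at h2
      linarith [h2]
    · intro h
      have h2 : ξ i * (T.card:ℝ)⁻¹ * ∑ j ∈ T, ξ j = 1 := by
        field_simp
        linarith [h]
      rw [h2, mul_one, sub_self]
  rw [funext_iff]
  simp only [Pi.zero_apply]
  constructor
  · intro h i hi j hj
    have hi' := (key i hi).mp (h i)
    have hj' := (key j hj).mp (h j)
    have hsum : (∑ k ∈ T, ξ k) ≠ 0 := by
      intro h0
      rw [h0, mul_zero] at hi'
      exact absurd hi'.symm hnpos.ne'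
    have := hi'.trans hj'.symm
    exact mul_right_cancel₀ hsum this
  · intro hconst i
    by_cases hi : i ∈ T
    · rw [key i hi]
      obtain ⟨i0, hi0⟩ := hT
      have hsum : (∑ j ∈ T, ξ j) = (T.card : ℝ) * ξ i0 := by
        rw [Finset.sum_congr rfl (fun j hj => hconst j hj i0 hi0),
          Finset.sum_const, nsmul_eq_mul]
      rw [hsum, hconst i hi i0 hi0]
      have : ξ i0 * ξ i0 = 1 := by
        rcases hξ i0 hi0 with h | h <;> rw [h] <;> ring
      calc ξ i0 * ((T.card:ℝ) * ξ i0) = (T.card:ℝ) * (ξ i0 * ξ i0) := by ring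
        _ = (T.card:ℝ) := by rw [this, mul_one]
    · rw [hJ i, if_neg hi, zero_pow (by omega), zero_mul, sub_self]
end

section
/- Let K ≥ 1, let p ≥ 1 be real, and let m ≥ 1 be an odd integer. Define F on ℝ^K by F(J)_i = J_i^m − J_i ∑_{j=1}^K J_j^{m−1} |J_j|^p. Let T ⊆ {1,…,K} be nonempty with n = |T| elements and let ξ : T → {−1, +1} be an arbitrary sign pattern. Then the vector J ∈ ℝ^K with J_i = ξ_i · n^{−1/p} for i ∈ T and J_i = 0 for i ∉ T satisfies F(J) = 0, i.e. every such n-sparse sign pattern is a steady state of the diagonal-correlation Hebbian dynamics. -/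
open Filter Topology

/-- Diagonal input correlations with `m = a + c` odd: every `n`-sparse configuration
with nonzero weights `ξ_i · n^{-1/p}`, for an arbitrary sign pattern `ξ`, is a steady
state of the diagonal-correlation Hebbian dynamics. -/
theorem stmt16 (K : ℕ) (hK : 1 ≤ K) (p : ℝ) (hp : 1 ≤ p)
    (m : ℕ) (hm : 1 ≤ m) (hmodd : Odd m)
    (F : (Fin K → ℝ) → (Fin K → ℝ))
    (hF : F = fun J i => J i ^ m - J i * ∑ j, J j ^ (m - 1) * |J j| ^ p)
    (T : Finset (Fin K)) (hT : T.Nonempty)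
    (ξ : Fin K → ℝ) (hξ : ∀ i ∈ T, ξ i = 1 ∨ ξ i = -1)
    (J : Fin K → ℝ)
    (hJ : ∀ i, J i = if i ∈ T then ξ i * (T.card : ℝ) ^ (-(1 / p)) else 0) :
    F J = 0 := by
  subst hF
  have hp0 : p ≠ 0 := by linarith
  have hpos : (0:ℝ) < p := by linarith
  have hn : (0:ℝ) < (T.card : ℝ) := by
    exact_mod_cast Finset.card_pos.mpr hT
  set n : ℝ := (T.card : ℝ) with hndef
  set c : ℝ := n ^ (-(1 / p)) with hcdef
  have hc : (0:ℝ) < c := Real.rpow_pos_of_pos hn _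
  have hcp : c ^ p = n⁻¹ := by
    rw [hcdef, ← Real.rpow_mul hn.le]
    rw [show -(1/p) * p = -1 by field_simp]
    rw [Real.rpow_neg_one]
  have heven : Even (m - 1) := by
    rcases hmodd with ⟨k, hk⟩
    exact ⟨k, by omega⟩
  -- compute the sum
  have hsum : (∑ j, J j ^ (m - 1) * |J j| ^ p) = c ^ (m - 1) := by
    rw [← Finset.sum_subset (Finset.subset_univ T)]
    · have : ∀ j ∈ T, J j ^ (m - 1) * |J j| ^ p = c ^ (m - 1) * n⁻¹ := by
        intro j hj
        have hJj : J j = ξ j * c := by rw [hJ j, if_pos hj]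
        have hξj : ξ j ^ (m - 1) = 1 := by
          rcases hξ j hj with h | h <;> rw [h]
          · simp
          · exact heven.neg_one_pow
        have habs : |ξ j * c| = c := by
          rw [abs_mul, abs_of_pos hc]
          rcases hξ j hj with h | h <;> rw [h] <;> norm_num
        rw [hJj, mul_pow, hξj, one_mul, habs, hcp]
      rw [Finset.sum_congr rfl this, Finset.sum_const, nsmul_eq_mul]
      rw [mul_comm, mul_assoc, inv_mul_cancel₀ hn.ne', mul_one]
    · intro j _ hj
      have hJj : J j = 0 := by rw [hJ j, if_neg hj]
      rw [hJj, abs_zero, Real.zero_rpow hp0, mul_zero]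
  funext i
  simp only [Pi.zero_apply, hsum]
  by_cases hi : i ∈ T
  · have hJi : J i = ξ i * c := by rw [hJ i, if_pos hi]
    have hξi : ξ i ^ m = ξ i := by
      rcases hξ i hi with h | h <;> rw [h]
      · simp
      · rw [hmodd.neg_one_pow]
    rw [hJi, mul_pow, hξi]
    have : c ^ m = c * c ^ (m - 1) := by
      rw [← pow_succ']
      congr 1
      omega
    rw [this]
    ring
  · have hJi : J i = 0 := by rw [hJ i, if_neg hi]
    rw [hJi, zero_pow (by omega), zero_mul, sub_zero]
end

section
/- Let K ≥ 1, let p ≥ 1 be real, and let m ≥ 2 be an integer. Define F on ℝ^K by F(J)_i = J_i^m − J_i ∑_{j=1}^K J_j^{m−1} |J_j|^p, and let e_j be the j-th standard basis vector. Then F(e_j) = 0, F is Fréchet differentiable at e_j, and the derivative of F at e_j is a diagonal linear map all of whose diagonal entries are negative; hence the fully sparse weight configuration with one synaptic weight equal to 1 and the rest equal to 0 is a linearly stable equilibrium whenever a + c > 1. -/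
/-!
Write `F(J)_i = J_i^m - J_i S(J)` with `S(J) = ∑_k g(J_k)` and `g(x) = x^(m-1) |x|^p`.
Since `g 0 = 0` and `g 1 = 1`, `S(e_j) = 1` and `e_j` is an equilibrium. As `g` is flat at `0`,
the derivative of `S` at `e_j` only sees the `j`-th coordinate, with slope `g'(1) = m - 1 + p`.
Hence `DF(e_j)` is diagonal: the `j`-th entry is `m - 1 - g'(1) = -p` and every other entry is
`-S(e_j) = -1`.
-/

theorem hasDerivAt_pow_mul_abs_rpow_zero {n : ℕ} (hn : n ≠ 0) {p : ℝ} (hp : 0 < p) :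
    HasDerivAt (fun x : ℝ => x ^ n * |x| ^ p) 0 0 := by
  obtain ⟨k, rfl⟩ := Nat.exists_eq_succ_of_ne_zero hn
  rw [hasDerivAt_iff_tendsto_slope]
  -- the slope at `x ≠ 0` is `x ^ k * |x| ^ p`, which tends to `0`
  have hslope : ContinuousAt (fun x : ℝ => x ^ k * |x| ^ p) 0 :=
    ((continuous_pow k).mul (continuous_abs.rpow_const fun _ => Or.inr hp.le)).continuousAt
  have hlim := hslope.tendsto
  simp only [abs_zero, Real.zero_rpow hp.ne', mul_zero] at hlim
  refine (hlim.mono_left nhdsWithin_le_nhds).congr' ?_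
  filter_upwards [self_mem_nhdsWithin] with x (hx : x ≠ 0)
  simp only [slope_def_field, pow_succ]
  field_simp
  ring

theorem hasDerivAt_pow_mul_abs_rpow_one (n : ℕ) (p : ℝ) :
    HasDerivAt (fun x : ℝ => x ^ n * |x| ^ p) (n + p) 1 := by
  have h := (hasDerivAt_pow n (1 : ℝ)).mul
    (Real.hasDerivAt_rpow_const (p := p) (Or.inl one_ne_zero))
  simp only [one_pow, Real.one_rpow, mul_one, one_mul] at h
  refine h.congr_of_eventuallyEq ?_
  filter_upwards [eventually_gt_nhds one_pos] with x hx
  simp [abs_of_pos hx]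

section HebbianField

variable {ι : Type*} [Fintype ι] [DecidableEq ι]

def hebbianField (m : ℕ) (g : ℝ → ℝ) (J : ι → ℝ) : ι → ℝ :=
  fun i => J i ^ m - J i * ∑ k, g (J k)

theorem sum_comp_single_one {g : ℝ → ℝ} (g0 : g 0 = 0) (j : ι) :
    ∑ k, g ((Pi.single j 1 : ι → ℝ) k) = g 1 := by
  rw [Finset.sum_eq_single j (fun k _ hk => by rw [Pi.single_eq_of_ne hk, g0])
    (fun h => absurd (Finset.mem_univ j) h), Pi.single_eq_same]

theorem hebbianField_single_one {m : ℕ} (hm : m ≠ 0) {g : ℝ → ℝ} (g0 : g 0 = 0)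
    (g1 : g 1 = 1) (j : ι) : hebbianField m g (Pi.single j 1 : ι → ℝ) = 0 := by
  funext i
  rw [hebbianField, sum_comp_single_one g0, g1]
  rcases eq_or_ne i j with rfl | hij
  · simp
  · simp [Pi.single_eq_of_ne hij, hm]

theorem hasFDerivAt_sum_comp_single_one {g : ℝ → ℝ} {c : ℝ} (hg0 : HasDerivAt g 0 0)
    (hg1 : HasDerivAt g c 1) (j : ι) :
    HasFDerivAt (fun J : ι → ℝ => ∑ k, g (J k))
      (c • (ContinuousLinearMap.proj j : (ι → ℝ) →L[ℝ] ℝ))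
      (Pi.single j 1) := by
  have hterm (k : ι) : HasFDerivAt (fun J : ι → ℝ => g (J k))
      ((if k = j then c else 0) • (ContinuousLinearMap.proj k : (ι → ℝ) →L[ℝ] ℝ))
      (Pi.single j 1) := by
    refine HasDerivAt.comp_hasFDerivAt _ ?_
      (ContinuousLinearMap.proj k : (ι → ℝ) →L[ℝ] ℝ).hasFDerivAt
    rcases eq_or_ne k j with rfl | hkj
    · simpa using hg1
    · simpa [Pi.single_eq_of_ne hkj, hkj] using hg0
  simpa only [ite_smul, zero_smul, Finset.sum_ite_eq', Finset.mem_univ, if_true]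
    using HasFDerivAt.fun_sum (u := Finset.univ) fun k _ => hterm k

theorem hasFDerivAt_hebbianField_single_one {m : ℕ} (hm : m ≠ 1) {g : ℝ → ℝ} {c : ℝ}
    (g0 : g 0 = 0) (g1 : g 1 = 1) (hg0 : HasDerivAt g 0 0) (hg1 : HasDerivAt g c 1) (j : ι) :
    HasFDerivAt (hebbianField m g : (ι → ℝ) → ι → ℝ)
      (ContinuousLinearMap.pi fun i =>
        (if i = j then (m : ℝ) - 1 - c else -1) •
          (ContinuousLinearMap.proj i : (ι → ℝ) →L[ℝ] ℝ))
      (Pi.single j 1) := by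
  rw [hasFDerivAt_pi']
  intro i
  have hS := hasFDerivAt_sum_comp_single_one hg0 hg1 j
  have hproj := (ContinuousLinearMap.proj i : (ι → ℝ) →L[ℝ] ℝ).hasFDerivAt
    (x := Pi.single j 1)
  convert ((hasDerivAt_pow m _).comp_hasFDerivAt _ hproj).sub (hproj.mul hS) using 1
  · rfl
  ext v
  rcases eq_or_ne i j with rfl | hij
  · simp [sum_comp_single_one g0, g1]
    ring
  · have hpow : (m : ℝ) * 0 ^ (m - 1) = 0 := by
      rcases eq_or_ne m 0 with rfl | hm0
      · simp
      · rw [zero_pow (by omega), mul_zero]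
    simp [hij, sum_comp_single_one g0, g1, hpow]

end HebbianField

theorem stmt17_general (K : ℕ) (p : ℝ) (hp : 1 ≤ p)
    (m : ℕ) (hm : 2 ≤ m)
    (F : (Fin K → ℝ) → (Fin K → ℝ))
    (hF : F = fun J i => J i ^ m - J i * ∑ j, J j ^ (m - 1) * |J j| ^ p)
    (j : Fin K) :
    F (Pi.single j 1) = 0 ∧
    ∃ d : Fin K → ℝ, (∀ i, d i < 0) ∧
      HasFDerivAt (𝕜 := ℝ) F
        (ContinuousLinearMap.pi fun i => d i • ContinuousLinearMap.proj i)
        (Pi.single j 1) := by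
  set g : ℝ → ℝ := fun x => x ^ (m - 1) * |x| ^ p
  obtain rfl : F = hebbianField m g := hF
  have hp0 : 0 < p := by linarith
  have hm1 : m - 1 ≠ 0 := by omega
  have g0 : g 0 = 0 := by simp [g, hm1]
  have g1 : g 1 = 1 := by simp [g]
  refine ⟨hebbianField_single_one (by omega) g0 g1 j, _, fun i => ?_,
    hasFDerivAt_hebbianField_single_one (by omega) g0 g1
      (hasDerivAt_pow_mul_abs_rpow_zero hm1 hp0) (hasDerivAt_pow_mul_abs_rpow_one _ p) j⟩
  split_ifs
  · push_cast [Nat.cast_sub (by omega : 1 ≤ m)]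
    linarith
  · norm_num

/-- Diagonal input correlations with `m = a + c > 1`: the fully sparse configuration
`e_j` is an equilibrium of `F`, `F` is Fréchet differentiable there, and its
derivative is diagonal with all diagonal entries negative (linear stability). -/
theorem stmt17 (K : ℕ) (hK : 1 ≤ K) (p : ℝ) (hp : 1 ≤ p)
    (m : ℕ) (hm : 2 ≤ m)
    (F : (Fin K → ℝ) → (Fin K → ℝ))
    (hF : F = fun J i => J i ^ m - J i * ∑ j, J j ^ (m - 1) * |J j| ^ p)
    (j : Fin K) :
    F (Pi.single j 1) = 0 ∧
    ∃ d : Fin K → ℝ, (∀ i, d i < 0) ∧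
      HasFDerivAt (𝕜 := ℝ) F
        (ContinuousLinearMap.pi fun i => d i • ContinuousLinearMap.proj i)
        (Pi.single j 1) :=
  stmt17_general K p hp m hm F hF j
end

section
/- Let K ≥ 1, let a ≥ 1 be an integer, let p ≥ 1 be real, let r be a nonzero real, and let T ⊆ {1,…,K} be nonempty. For J ∈ ℝ^K set M(J) = ∑_{j∈T} J_j and L(J) = ∑_{j∈T} |J_j|^p, and consider the rank-one-correlation Hebbian dynamics with weight exponent c = 1: dJ_i/dt = r^{a+1} M(J)^a ( χ_T(i) J_i − J_i L(J) ), where χ_T(i) = 1 if i ∈ T and 0 otherwise. Then: (1) every J* ∈ ℝ^K with J*_i = 0 for all i ∉ T and L(J*) = 1 is an equilibrium; and (2) along any differentiable solution J : [0,∞) → ℝ^K, the pair (L, M) = (L(J(t)), M(J(t))) satisfies the closed system dL/dt = p r^{a+1} M^a L (1 − L) and dM/dt = r^{a+1} M^{a+1} (1 − L). -/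
open Topology

/-!
On `T` the field is `χ_T(i) J_i - J_i L` times `r^{a+1} Mᵃ`, so every coordinate `j ∈ T` solves
the linear equation `J_j' = c J_j` with the common scalar `c = r^{a+1} Mᵃ (1 - L)`. Hence
`M' = c M`, and since `(|x|ᵖ)' = p |x|ᵖ (x' / x)`, also `L' = p c L`. Where a coordinate
vanishes its derivative `c J_j` vanishes too, and `p ≥ 1` gives `|x|ᵖ ≤ |x| = o(s - t)` there.
-/

namespace HasDerivAt

variable {g : ℝ → ℝ} {g' c t p : ℝ}

theorem abs_rpow_of_ne_zero (hg : HasDerivAt g g' t) (ht : g t ≠ 0) :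
    HasDerivAt (fun s => |g s| ^ p) (SignType.sign (g t) * g' * p * |g t| ^ (p - 1)) t :=
  ((hasDerivAt_abs ht).comp t hg).rpow_const (Or.inl (abs_ne_zero.mpr ht))

theorem abs_rpow_of_eq_zero (hp : 1 ≤ p) (hg : HasDerivAt g 0 t) (ht : g t = 0) :
    HasDerivAt (fun s => |g s| ^ p) 0 t := by
  have hp0 : p ≠ 0 := by positivity
  have hsmall : ∀ᶠ s in 𝓝 t, |g s| ≤ 1 := by
    have := hg.continuousAt.tendsto
    rw [ht] at this
    exact this.eventually (Metric.closedBall_mem_nhds 0 one_pos) |>.mono fun s hs => by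
      simpa using hs
  have hbig : (fun s => |g s| ^ p) =O[𝓝 t] g := by
    refine Asymptotics.IsBigO.of_bound 1 (hsmall.mono fun s hs => ?_)
    rw [one_mul, Real.norm_of_nonneg (by positivity), Real.norm_eq_abs]
    exact Real.rpow_le_self_of_le_one (abs_nonneg _) hs hp
  rw [hasDerivAt_iff_isLittleO] at hg ⊢
  simpa [ht, Real.zero_rpow hp0] using hbig.trans_isLittleO (by simpa [ht] using hg)

theorem abs_rpow_of_eq_mul (hp : 1 ≤ p) (hg : HasDerivAt g (c * g t) t) :
    HasDerivAt (fun s => |g s| ^ p) (p * c * |g t| ^ p) t := by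
  rcases eq_or_ne (g t) 0 with ht | ht
  · simpa [ht, Real.zero_rpow (by positivity : p ≠ 0)] using
      abs_rpow_of_eq_zero hp (by simpa [ht] using hg) ht
  · convert abs_rpow_of_ne_zero (p := p) hg ht using 1
    rw [Real.rpow_sub_one (abs_ne_zero.mpr ht), mul_left_comm, sign_mul_self]
    field_simp

end HasDerivAt

section RankOneHebbian

variable {ι : Type*} [DecidableEq ι] (a : ℕ) (p r : ℝ) (T : Finset ι)

noncomputable def rankOneHebbianField (J : ι → ℝ) (i : ι) : ℝ :=
  r ^ (a + 1) * (∑ j ∈ T, J j) ^ a * ((if i ∈ T then J i else 0) - J i * ∑ j ∈ T, |J j| ^ p)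

variable {a p r T}

theorem rankOneHebbianField_eq_zero {J : ι → ℝ} (hJ : ∀ i ∉ T, J i = 0)
    (hL : ∑ j ∈ T, |J j| ^ p = 1) : rankOneHebbianField a p r T J = 0 := by
  funext i
  by_cases hi : i ∈ T <;> simp [rankOneHebbianField, hL, hi, hJ]

theorem rankOneHebbianField_of_mem (J : ι → ℝ) {i : ι} (hi : i ∈ T) :
    rankOneHebbianField a p r T J i =
      r ^ (a + 1) * (∑ j ∈ T, J j) ^ a * (1 - ∑ j ∈ T, |J j| ^ p) * J i := by
  rw [rankOneHebbianField, if_pos hi]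
  ring

end RankOneHebbian

theorem hasDerivAt_sum_abs_rpow_of_eq_mul {ι : Type*} {T : Finset ι} {J : ℝ → ι → ℝ}
    {c t p : ℝ} (hp : 1 ≤ p) (hJ : ∀ j ∈ T, HasDerivAt (fun s => J s j) (c * J t j) t) :
    HasDerivAt (fun s => ∑ j ∈ T, |J s j| ^ p) (p * c * ∑ j ∈ T, |J t j| ^ p) t := by
  rw [Finset.mul_sum]
  exact HasDerivAt.fun_sum fun j hj => (hJ j hj).abs_rpow_of_eq_mul hp

theorem hasDerivAt_sum_of_eq_mul {ι : Type*} {T : Finset ι} {J : ℝ → ι → ℝ}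
    {c t : ℝ} (hJ : ∀ j ∈ T, HasDerivAt (fun s => J s j) (c * J t j) t) :
    HasDerivAt (fun s => ∑ j ∈ T, J s j) (c * ∑ j ∈ T, J t j) t := by
  rw [Finset.mul_sum]
  exact HasDerivAt.fun_sum hJ

theorem stmt19_general (K : ℕ) (a : ℕ)
    (p : ℝ) (hp : 1 ≤ p) (r : ℝ)
    (T : Finset (Fin K))
    (F : (Fin K → ℝ) → (Fin K → ℝ))
    (hF : F = fun J i => r ^ (a + 1) * (∑ j ∈ T, J j) ^ a *
      ((if i ∈ T then J i else 0) - J i * ∑ j ∈ T, |J j| ^ p)) :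
    (∀ Js : Fin K → ℝ, (∀ i ∉ T, Js i = 0) → (∑ j ∈ T, |Js j| ^ p) = 1 →
      F Js = 0) ∧
    (∀ J : ℝ → Fin K → ℝ,
      (∀ t ≥ (0 : ℝ), ∀ i, HasDerivAt (fun s => J s i) (F (J t) i) t) →
      ∀ t ≥ (0 : ℝ),
        HasDerivAt (fun s => ∑ j ∈ T, |J s j| ^ p)
          (p * r ^ (a + 1) * (∑ j ∈ T, J t j) ^ a * (∑ j ∈ T, |J t j| ^ p)
            * (1 - ∑ j ∈ T, |J t j| ^ p)) t ∧
        HasDerivAt (fun s => ∑ j ∈ T, J s j)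
          (r ^ (a + 1) * (∑ j ∈ T, J t j) ^ (a + 1) * (1 - ∑ j ∈ T, |J t j| ^ p)) t) := by
  change F = rankOneHebbianField a p r T at hF
  subst hF
  refine ⟨fun Js hJs hL => rankOneHebbianField_eq_zero hJs hL, fun J hJ t ht => ?_⟩
  have hmem : ∀ j ∈ T, HasDerivAt (fun s => J s j)
      (r ^ (a + 1) * (∑ j ∈ T, J t j) ^ a * (1 - ∑ j ∈ T, |J t j| ^ p) * J t j) t :=
    fun j hj => rankOneHebbianField_of_mem (J t) hj ▸ hJ t ht j
  constructor
  · convert hasDerivAt_sum_abs_rpow_of_eq_mul hp hmem using 1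
    ring
  · convert hasDerivAt_sum_of_eq_mul hmem using 1
    ring

/-- Rank-one piecewise-constant input correlations with weight exponent `c = 1`:
every weight vector supported on `T` with unit `ℓᵖ`-mass is an equilibrium, and along
any solution the pair `(L, M)` satisfies the closed system
`dL/dt = p r^{a+1} Mᵃ L (1 - L)`, `dM/dt = r^{a+1} M^{a+1} (1 - L)`. -/
theorem stmt19 (K : ℕ) (hK : 1 ≤ K) (a : ℕ) (ha : 1 ≤ a)
    (p : ℝ) (hp : 1 ≤ p) (r : ℝ) (hr : r ≠ 0)
    (T : Finset (Fin K)) (hT : T.Nonempty)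
    (F : (Fin K → ℝ) → (Fin K → ℝ))
    (hF : F = fun J i => r ^ (a + 1) * (∑ j ∈ T, J j) ^ a *
      ((if i ∈ T then J i else 0) - J i * ∑ j ∈ T, |J j| ^ p)) :
    (∀ Js : Fin K → ℝ, (∀ i ∉ T, Js i = 0) → (∑ j ∈ T, |Js j| ^ p) = 1 →
      F Js = 0) ∧
    (∀ J : ℝ → Fin K → ℝ,
      (∀ t ≥ (0 : ℝ), ∀ i, HasDerivAt (fun s => J s i) (F (J t) i) t) →
      ∀ t ≥ (0 : ℝ),
        HasDerivAt (fun s => ∑ j ∈ T, |J s j| ^ p)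
          (p * r ^ (a + 1) * (∑ j ∈ T, J t j) ^ a * (∑ j ∈ T, |J t j| ^ p)
            * (1 - ∑ j ∈ T, |J t j| ^ p)) t ∧
        HasDerivAt (fun s => ∑ j ∈ T, J s j)
          (r ^ (a + 1) * (∑ j ∈ T, J t j) ^ (a + 1) * (1 - ∑ j ∈ T, |J t j| ^ p)) t) :=
  stmt19_general K a p hp r T F hF
end
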